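/- arXiv:2307.07410 — 7 statements merged into one kernel-verified Lean document; each statement's English description precedes it below -/
import Mathlib

section
/- For every p ≥ 2 and every u ∈ (0,∞) it holds that g_p'(u) ≤ q_p'(u) ≤ g_p'(u+1), where q_p'(u) = h_p^{−1}(u). Explicitly: for p = 2, ln(u) ≤ h_2^{−1}(u) ≤ ln(u+1); for p > 2, 1 − u^{2/p−1} ≤ h_p^{−1}(u) ≤ 1 − (u+1)^{2/p−1}. -/
noncomputable section

/-- The Euclidean (ℓ²) norm of a vector in ℝⁿ. -/
def norm2 {n : ℕ} (v : Fin n → ℝ) : ℝ := Real.sqrt (∑ i, v i ^ 2)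

/-- The ℓ¹ norm of a vector in ℝⁿ. -/
def norm1 {n : ℕ} (v : Fin n → ℝ) : ℝ := ∑ i, |v i|

/-- The sup (ℓ^∞) norm of a vector in ℝⁿ. -/
def normInf {n : ℕ} (v : Fin n → ℝ) : ℝ := ⨆ i, |v i|

/-- The ℓʳ (quasi-)norm ‖v‖_r = (∑ |v i|^r)^(1/r). -/
def normr {n : ℕ} (r : ℝ) (v : Fin n → ℝ) : ℝ := (∑ i, |v i| ^ r) ^ (1 / r)

/-- The smallest singular value of `A`, via `σ_min(A) = inf {‖Aᵀ z‖₂ : ‖z‖₂ = 1}`. -/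
def sigmaMin {m N : ℕ} (A : Matrix (Fin m) (Fin N) ℝ) : ℝ :=
  sInf {c : ℝ | ∃ z : Fin m → ℝ, norm2 z = 1 ∧ c = norm2 (A.transpose.mulVec z)}

/-- The entropy H(z) = −∑ |z i| ln |z i| (with the convention 0 · ln 0 = 0,
which holds automatically since `Real.log 0 = 0`). -/
def Hent {n : ℕ} (z : Fin n → ℝ) : ℝ := -∑ i, |z i| * Real.log |z i|

/-- The set 𝒰(A,y) of basis-pursuit minimizers: minimizers of ‖·‖₁ subject to Az = y. -/
def BPset {m N : ℕ} (A : Matrix (Fin m) (Fin N) ℝ) (y : Fin m → ℝ) : Set (Fin N → ℝ) :=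
  {z | A.mulVec z = y ∧ ∀ w : Fin N → ℝ, A.mulVec w = y → norm1 z ≤ norm1 w}

/-- The basis-pursuit minimum value R(A,y) = min {‖z‖₁ : Az = y}. -/
def Rmin {m N : ℕ} (A : Matrix (Fin m) (Fin N) ℝ) (y : Fin m → ℝ) : ℝ :=
  sInf (norm1 '' {z : Fin N → ℝ | A.mulVec z = y})

/-- The function h_p: h₂(t) = 2 sinh t, and for p > 2,
h_p(t) = (1−t)^{−p/(p−2)} − (1+t)^{−p/(p−2)}. -/
def hfun (p t : ℝ) : ℝ :=
  if p = 2 then 2 * Real.sinh t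
  else (1 - t) ^ (-(p / (p - 2))) - (1 + t) ^ (-(p / (p - 2)))

/-- The natural domain of h_p: all of ℝ when p = 2, and (−1,1) when p > 2. -/
def hDomain (p : ℝ) : Set ℝ := if p = 2 then Set.univ else Set.Ioo (-1) 1

/-- The inverse h_p^{-1} : ℝ → ℝ of h_p (h_p is a strictly increasing bijection
from its domain onto ℝ). -/
def hInv (p u : ℝ) : ℝ := Function.invFunOn (hfun p) (hDomain p) u

/-- q_p(u) = ∫₀ᵘ h_p^{−1}(v) dv. -/
def qfun (p u : ℝ) : ℝ := ∫ v in (0:ℝ)..u, hInv p v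

/-- Q_p(z) = α^p ∑ q_p(z i / α^p). -/
def Qfun {n : ℕ} (p α : ℝ) (z : Fin n → ℝ) : ℝ := α ^ p * ∑ i, qfun p (z i / α ^ p)

/-- g_p: g₂(u) = |u| ln(|u|/e) (with g₂(0) = 0), and for p > 2,
g_p(u) = |u| − (p/2)|u|^{2/p}. -/
def gfun (p u : ℝ) : ℝ :=
  if p = 2 then (if u = 0 then 0 else |u| * Real.log (|u| / Real.exp 1))
  else |u| - p / 2 * |u| ^ (2 / p)

/-- G_p(z) = α^p ∑ g_p(z i / α^p). -/
def Gfun {n : ℕ} (p α : ℝ) (z : Fin n → ℝ) : ℝ := α ^ p * ∑ i, gfun p (z i / α ^ p)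

/-- The predictor ψ_θ = θ₊^p − θ₋^p (componentwise powers), for a parameter vector
θ = (θ₊, θ₋) ∈ ℝ^{2N}. -/
def psiOf {N : ℕ} (p : ℝ) (θ : EuclideanSpace ℝ (Fin N ⊕ Fin N)) : Fin N → ℝ :=
  fun i => θ (Sum.inl i) ^ p - θ (Sum.inr i) ^ p

/-- The squared loss L(θ) = (1/2)‖A ψ_θ − y‖₂². -/
def lossFun {m N : ℕ} (A : Matrix (Fin m) (Fin N) ℝ) (y : Fin m → ℝ) (p : ℝ)
    (θ : EuclideanSpace ℝ (Fin N ⊕ Fin N)) : ℝ :=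
  (1 / 2) * ∑ j, (A.mulVec (psiOf p θ) j - y j) ^ 2

end
/-- Proposition `qg'_bound`: for p ≥ 2 and u > 0 one has
g_p'(u) ≤ q_p'(u) ≤ g_p'(u+1), where q_p'(u) = h_p^{−1}(u) (here t denotes the
point of the domain of h_p with h_p(t) = u, i.e. t = h_p^{−1}(u)).  Explicitly:
for p = 2, ln(u) ≤ h₂^{−1}(u) ≤ ln(u+1); for p > 2,
1 − u^{2/p−1} ≤ h_p^{−1}(u) ≤ 1 − (u+1)^{2/p−1}. -/
theorem stmt2 (p : ℝ) (hp : 2 ≤ p) (u : ℝ) (hu : 0 < u)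
    (t : ℝ) (ht : 2 < p → t ∈ Set.Ioo (-1 : ℝ) 1) (hht : hfun p t = u) :
    (p = 2 → Real.log u ≤ t ∧ t ≤ Real.log (u + 1)) ∧
    (2 < p → 1 - u ^ (2 / p - 1) ≤ t ∧ t ≤ 1 - (u + 1) ^ (2 / p - 1)) := by
  constructor
  · intro hp2
    subst hp2
    rw [hfun, if_pos rfl, Real.sinh_eq] at hht
    have hht' : Real.exp t - Real.exp (-t) = u := by linarith
    have ht0 : 0 < t := by
      by_contra h
      push_neg at h
      have : Real.exp t ≤ Real.exp (-t) := Real.exp_le_exp.2 (by linarith)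
      linarith
    constructor
    · have : u < Real.exp t := by have := Real.exp_pos (-t); linarith
      calc Real.log u ≤ Real.log (Real.exp t) := Real.log_le_log hu this.le
        _ = t := Real.log_exp t
    · have h1 : Real.exp (-t) ≤ 1 := Real.exp_le_one_iff.2 (by linarith)
      have : Real.exp t ≤ u + 1 := by linarith
      calc t = Real.log (Real.exp t) := (Real.log_exp t).symm
        _ ≤ Real.log (u + 1) := Real.log_le_log (Real.exp_pos t) this
  · intro hp2
    have hne : p ≠ 2 := ne_of_gt hp2
    obtain ⟨ht1, ht2⟩ := ht hp2
    rw [hfun, if_neg hne] at hht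
    set e : ℝ := -(p / (p - 2)) with he
    have hp2' : 0 < p - 2 := by linarith
    have hppos : 0 < p := by linarith
    have hrpos : 0 < p / (p - 2) := div_pos hppos hp2'
    have heneg : e < 0 := by simp [he]; positivity
    have h1t : (0:ℝ) < 1 - t := by linarith
    have h1t' : (0:ℝ) < 1 + t := by linarith
    have ht0 : 0 < t := by
      by_contra h
      push_neg at h
      have hle : 1 + t ≤ 1 - t := by linarith
      have := Real.rpow_le_rpow_of_nonpos h1t' hle heneg.le
      linarith
    have hneg : 2 / p - 1 < 0 := by
      rw [sub_neg, div_lt_one hppos]; exact hp2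
    have he1 : e * (2 / p - 1) = 1 := by
      rw [he]; field_simp; ring
    have hmul : ((1 - t) ^ e) ^ (2 / p - 1) = 1 - t := by
      rw [← Real.rpow_mul h1t.le, he1, Real.rpow_one]
    constructor
    · have hule : u ≤ (1 - t) ^ e := by
        have : (0:ℝ) ≤ (1 + t) ^ e := Real.rpow_nonneg h1t'.le e
        linarith
      have := Real.rpow_le_rpow_of_nonpos hu hule hneg.le
      rw [hmul] at this
      linarith
    · have h1le : (1 + t) ^ e ≤ 1 :=
        Real.rpow_le_one_of_one_le_of_nonpos (by linarith) heneg.le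
      have hule : (1 - t) ^ e ≤ u + 1 := by linarith
      have := Real.rpow_le_rpow_of_nonpos (Real.rpow_pos_of_pos h1t e) hule hneg.le
      rw [hmul] at this
      linarith
end

section
/- Let A ∈ ℝ^{m×N} with rank(A) = m, y ∈ ℝ^m, p ∈ [2,∞) and α > 0. Then the gradient-flow state satisfies, componentwise for i = 1,…,N and every T ≥ 0: [ψ_α(T)]_i = α^p h_p( C ∫₀ᵀ [r(t)]_i dt ), where r(t) = Aᵀ(y − Aψ_α(t)), and C = 4 if p = 2 and C = p(p−2)α^{p−2} if p > 2. -/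
/-!
Each coordinate `u` of `θ₊` (resp. `θ₋`) solves the scalar equation `u' = p u^(p-1) r` with
`u(0) = α` and `r = ±[Aᵀ(y − Aψ)]ᵢ` continuous. Read as the linear equation
`u' = (p u^(p-2) r) u`, it gives `u = α exp (∫ p u^(p-2) r) > 0`. For `p = 2` this is
`u = α exp (2 ∫ r)`; for `p > 2` the quantity `u^(2-p) + p(p-2) ∫ r` is conserved, whence
`u^p = α^p (1 - p(p-2) α^(p-2) ∫ r)^(-p/(p-2))`. Subtracting the two coordinates produces `h_p`,
because `h_p(t) = k(t) - k(-t)` for `k(t) = exp t`, resp. `k(t) = (1 - t)^(-p/(p-2))`.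
-/

open Set Real

noncomputable def hHalf (p t : ℝ) : ℝ := if p = 2 then exp t else (1 - t) ^ (-(p / (p - 2)))

noncomputable def flowConst (p α : ℝ) : ℝ := if p = 2 then 4 else p * (p - 2) * α ^ (p - 2)

theorem hfun_eq_sub_hHalf (p t : ℝ) : hfun p t = hHalf p t - hHalf p (-t) := by
  unfold hfun hHalf
  split_ifs
  · rw [sinh_eq]; ring
  · rw [sub_neg_eq_add]

theorem eq_of_hasDerivWithinAt_Ici_zero {g : ℝ → ℝ} {a T : ℝ}
    (hg : ∀ t, a ≤ t → HasDerivWithinAt g 0 (Ici a) t) (hT : a ≤ T) : g T = g a :=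
  constant_of_has_deriv_right_zero
    (fun t ht => (hg t ht.1).continuousWithinAt.mono Icc_subset_Ici_self)
    (fun t ht => (hg t ht.1).mono (Ici_subset_Ici.mpr ht.1)) T ⟨hT, le_rfl⟩

theorem hasDerivWithinAt_integral_Ici {r : ℝ → ℝ} {a t : ℝ} (hr : ContinuousOn r (Ici a))
    (ht : a ≤ t) : HasDerivWithinAt (fun u => ∫ s in a..u, r s) (r t) (Ici a) t := by
  have hr' : Continuous fun s => r (max s a) :=
    hr.comp_continuous (continuous_id.max continuous_const) fun s => le_max_right s a
  have heq : EqOn (fun u => ∫ s in a..u, r s) (fun u => ∫ s in a..u, r (max s a)) (Ici a) :=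
    fun u hu => intervalIntegral.integral_congr fun s hs => by
      rw [uIcc_of_le hu] at hs
      rw [max_eq_left hs.1]
  have key := (hr'.integral_hasStrictDerivAt a t).hasDerivAt.hasDerivWithinAt (s := Ici a)
  rw [max_eq_left ht] at key
  exact key.congr heq (heq ht)

section ScalarFlow

variable {f r : ℝ → ℝ} {p α T : ℝ}

theorem eq_mul_exp_integral_of_hasDerivWithinAt {a : ℝ → ℝ} (ha : ContinuousOn a (Ici 0))
    (hf : ∀ t, 0 ≤ t → HasDerivWithinAt f (a t * f t) (Ici 0) t) (hT : 0 ≤ T) :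
    f T = f 0 * exp (∫ s in (0:ℝ)..T, a s) := by
  set R := fun u => ∫ s in (0:ℝ)..u, a s with hR
  have hconst : f T * exp (-R T) = f 0 * exp (-R 0) := by
    refine eq_of_hasDerivWithinAt_Ici_zero (g := fun u => f u * exp (-R u))
      (fun t ht => ?_) hT
    exact ((hf t ht).fun_mul (hasDerivWithinAt_integral_Ici ha ht).fun_neg.exp).congr_deriv
      (by ring)
  calc f T = f T * exp (-R T) * exp (R T) := by
        rw [mul_assoc, ← exp_add, neg_add_cancel, exp_zero, mul_one]
    _ = f 0 * exp (R T) := by rw [hconst]; simp [hR]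

variable (hr : ContinuousOn r (Ici 0)) (hf0 : f 0 = α)
  (hf : ∀ t, 0 ≤ t → HasDerivWithinAt f (p * f t ^ (p - 1) * r t) (Ici 0) t)
include hr hf0 hf

theorem pos_of_hasDerivWithinAt_rpow (hp : 2 ≤ p) (hα : 0 < α) (hT : 0 ≤ T) : 0 < f T := by
  have hfc : ContinuousOn f (Ici 0) := fun t ht => (hf t ht).continuousWithinAt
  -- valid for negative `x` as well, so no sign information on `f` is needed
  have hpow : ∀ x : ℝ, x ^ (p - 1) = x ^ (p - 2) * x := fun x => by
    rcases eq_or_ne x 0 with rfl | hx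
    · rw [zero_rpow (by linarith), mul_zero]
    · rw [← rpow_add_one hx]; ring_nf
  have hlin : ∀ t, 0 ≤ t → HasDerivWithinAt f ((p * f t ^ (p - 2) * r t) * f t) (Ici 0) t :=
    fun t ht => (hf t ht).congr_deriv (by rw [hpow]; ring)
  have ha : ContinuousOn (fun t => p * f t ^ (p - 2) * r t) (Ici 0) :=
    (continuousOn_const.mul (hfc.rpow_const fun _ _ => Or.inr (by linarith))).mul hr
  rw [eq_mul_exp_integral_of_hasDerivWithinAt ha hlin hT, hf0]
  positivity

theorem rpow_eq_of_hasDerivWithinAt_rpow_of_two_lt (hp : 2 < p) (hα : 0 < α) (hT : 0 ≤ T) :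
    f T ^ p = α ^ p *
      (1 - p * (p - 2) * α ^ (p - 2) * ∫ s in (0:ℝ)..T, r s) ^ (-(p / (p - 2))) := by
  have hpos : ∀ t, 0 ≤ t → 0 < f t := fun t ht =>
    pos_of_hasDerivWithinAt_rpow hr hf0 hf hp.le hα ht
  set R := fun u => ∫ s in (0:ℝ)..u, r s with hR
  have hconserved : f T ^ (2 - p) + p * (p - 2) * R T = α ^ (2 - p) := by
    rw [eq_of_hasDerivWithinAt_Ici_zero (g := fun u => f u ^ (2 - p) + p * (p - 2) * R u)
      (fun t ht => ?_) hT, hf0]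
    · simp [hR]
    have hcancel : f t ^ (p - 1) * f t ^ (2 - p - 1) = 1 := by
      rw [← rpow_add (hpos t ht)]; ring_nf; exact rpow_zero _
    exact (((hf t ht).rpow_const (Or.inl (hpos t ht).ne')).fun_add
      ((hasDerivWithinAt_integral_Ici hr ht).const_mul _)).congr_deriv
      (by linear_combination (p * r t * (2 - p)) * hcancel)
  have hαcancel : α ^ (2 - p) * α ^ (p - 2) = 1 := by
    rw [← rpow_add hα]; ring_nf; exact rpow_zero _
  have hfT : f T ^ (2 - p) = α ^ (2 - p) * (1 - p * (p - 2) * α ^ (p - 2) * R T) := by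
    linear_combination hconserved + (p * (p - 2) * R T) * hαcancel
  have hX : 0 < 1 - p * (p - 2) * α ^ (p - 2) * R T := by
    have := rpow_pos_of_pos (hpos T hT) (2 - p)
    rw [hfT] at this
    exact pos_of_mul_pos_right this (rpow_pos_of_pos hα _).le
  have hexp : (2 - p) * (-(p / (p - 2))) = p := by
    field_simp [(sub_pos.mpr hp).ne']; ring
  calc f T ^ p = (f T ^ (2 - p)) ^ (-(p / (p - 2))) := by rw [← rpow_mul (hpos T hT).le, hexp]
    _ = (α ^ (2 - p)) ^ (-(p / (p - 2))) * _ := by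
      rw [hfT, mul_rpow (rpow_pos_of_pos hα _).le hX.le]
    _ = _ := by rw [← rpow_mul hα.le, hexp]

theorem rpow_eq_hHalf_of_hasDerivWithinAt_rpow (hp : 2 ≤ p) (hα : 0 < α) (hT : 0 ≤ T) :
    f T ^ p = α ^ p * hHalf p (flowConst p α * ∫ s in (0:ℝ)..T, r s) := by
  unfold hHalf flowConst
  split_ifs with hp2
  · subst hp2
    have hlin : ∀ t, 0 ≤ t → HasDerivWithinAt f (2 * r t * f t) (Ici 0) t := fun t ht =>
      (hf t ht).congr_deriv (by norm_num; ring)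
    rw [eq_mul_exp_integral_of_hasDerivWithinAt (a := fun t => 2 * r t)
      (continuousOn_const.mul hr) hlin hT, hf0, mul_rpow hα.le (exp_pos _).le, ← exp_mul,
      intervalIntegral.integral_const_mul]
    ring_nf
  · exact rpow_eq_of_hasDerivWithinAt_rpow_of_two_lt hr hf0 hf (hp.lt_of_ne' hp2) hα hT

end ScalarFlow

theorem EuclideanSpace.gradient_apply {ι : Type*} [Fintype ι] [DecidableEq ι]
    (g : EuclideanSpace ℝ ι → ℝ) (x : EuclideanSpace ℝ ι) (i : ι) :
    gradient g x i = fderiv ℝ g x (EuclideanSpace.single i 1) := by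
  rw [← inner_gradient_left, EuclideanSpace.inner_single_right]
  simp

section Loss

open Matrix

variable {m N : ℕ} (A : Matrix (Fin m) (Fin N) ℝ) (y : Fin m → ℝ) {p : ℝ}

local notation "E" => EuclideanSpace ℝ (Fin N ⊕ Fin N)

noncomputable def lossResidual (p : ℝ) (ξ : E) : Fin N → ℝ := Aᵀ *ᵥ (y - A *ᵥ psiOf p ξ)

theorem continuous_lossResidual (hp : 0 ≤ p) : Continuous (lossResidual A y p) := by
  have hψ : Continuous (psiOf (N := N) p) := continuous_pi fun k =>
    ((continuous_rpow_const hp).comp (EuclideanSpace.proj (Sum.inl k)).continuous).sub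
      ((continuous_rpow_const hp).comp (EuclideanSpace.proj (Sum.inr k)).continuous)
  exact continuous_const.matrix_mulVec (continuous_const.sub (continuous_const.matrix_mulVec hψ))

theorem hasFDerivAt_psiOf_apply (hp : 1 ≤ p) (ξ : E) (k : Fin N) :
    HasFDerivAt (fun ξ : E => psiOf p ξ k)
      ((p * ξ (Sum.inl k) ^ (p - 1)) • EuclideanSpace.proj (𝕜 := ℝ) (Sum.inl k) -
        (p * ξ (Sum.inr k) ^ (p - 1)) • EuclideanSpace.proj (Sum.inr k)) ξ :=
  ((EuclideanSpace.proj (𝕜 := ℝ) (ι := Fin N ⊕ Fin N) (Sum.inl k)).hasFDerivAt.rpow_const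
      (Or.inr hp)).fun_sub
    ((EuclideanSpace.proj (𝕜 := ℝ) (ι := Fin N ⊕ Fin N) (Sum.inr k)).hasFDerivAt.rpow_const
      (Or.inr hp))

theorem gradient_lossFun_apply (hp : 1 ≤ p) (ξ : E) (ι : Fin N ⊕ Fin N) :
    gradient (lossFun A y p) ξ ι =
      Sum.elim (fun k => -(p * ξ (Sum.inl k) ^ (p - 1) * lossResidual A y p ξ k))
        (fun k => p * ξ (Sum.inr k) ^ (p - 1) * lossResidual A y p ξ k) ι := by
  have hloss : lossFun A y p =
      fun θ : E => 1 / 2 * ∑ j, (∑ k, A j k * psiOf p θ k - y j) ^ 2 := rfl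
  have hL : HasFDerivAt (fun θ : E => 1 / 2 * ∑ j, (∑ k, A j k * psiOf p θ k - y j) ^ 2) _ ξ :=
    ((HasFDerivAt.fun_sum fun j _ => ((HasFDerivAt.fun_sum fun k _ =>
      (hasFDerivAt_psiOf_apply hp ξ k).const_mul (A j k)).sub_const (y j)).pow 2).const_mul
      (1 / 2 : ℝ))
  rw [EuclideanSpace.gradient_apply, hloss, hL.fderiv]
  cases ι <;> simp [lossResidual, mulVec, dotProduct]
  all_goals
    simp only [Finset.mul_sum, ← Finset.sum_neg_distrib]
    exact Finset.sum_congr rfl fun j _ => by ring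

end Loss

theorem stmt3_general (m N : ℕ)
    (A : Matrix (Fin m) (Fin N) ℝ)
    (y : Fin m → ℝ) (p : ℝ) (hp : 2 ≤ p) (α : ℝ) (hα : 0 < α)
    (θ : ℝ → EuclideanSpace ℝ (Fin N ⊕ Fin N))
    (hθ0 : ∀ i : Fin N ⊕ Fin N, θ 0 i = α)
    (hflow : ∀ t : ℝ, 0 ≤ t →
      HasDerivWithinAt θ (-gradient (lossFun A y p) (θ t)) (Set.Ici 0) t)
    (T : ℝ) (hT : 0 ≤ T) (i : Fin N) :
    psiOf p (θ T) i =
      α ^ p * hfun p ((if p = 2 then (4 : ℝ) else p * (p - 2) * α ^ (p - 2)) *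
        ∫ t in (0:ℝ)..T,
          A.transpose.mulVec (fun j => y j - A.mulVec (psiOf p (θ t)) j) i) := by
  have hp1 : 1 ≤ p := by linarith
  have hcoord : ∀ ι t, 0 ≤ t → HasDerivWithinAt (fun u => θ u ι)
      (-gradient (lossFun A y p) (θ t) ι) (Ici 0) t := fun ι t ht =>
    (EuclideanSpace.proj (𝕜 := ℝ) ι).hasFDerivAt.comp_hasDerivWithinAt t (hflow t ht)
  have hr : ContinuousOn (fun t => lossResidual A y p (θ t) i) (Ici 0) :=
    ((continuous_apply i).comp (continuous_lossResidual A y (by linarith))).comp_continuousOn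
      fun t ht => (hflow t ht).continuousWithinAt
  have hplus := rpow_eq_hHalf_of_hasDerivWithinAt_rpow hr (hθ0 (Sum.inl i))
    (fun t ht => by simpa [gradient_lossFun_apply A y hp1] using hcoord (Sum.inl i) t ht) hp hα hT
  have hminus := rpow_eq_hHalf_of_hasDerivWithinAt_rpow
    (r := fun t => -lossResidual A y p (θ t) i) hr.neg (hθ0 (Sum.inr i))
    (fun t ht => by simpa [gradient_lossFun_apply A y hp1] using hcoord (Sum.inr i) t ht) hp hα hT
  rw [intervalIntegral.integral_neg, mul_neg] at hminus
  change θ T (Sum.inl i) ^ p - θ T (Sum.inr i) ^ p =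
    α ^ p * hfun p (flowConst p α * ∫ t in (0:ℝ)..T, lossResidual A y p (θ t) i)
  rw [hplus, hminus, hfun_eq_sub_hHalf]
  ring

/-- Lemma `psi_integral`, the dynamics of ψ_α: componentwise,
[ψ_α(T)]ᵢ = α^p h_p(C ∫₀ᵀ [r(t)]ᵢ dt) with r(t) = Aᵀ(y − Aψ_α(t)), and C = 4 if
p = 2 and C = p(p−2)α^{p−2} if p > 2. -/
theorem stmt3 (m N : ℕ) (hm : 1 ≤ m) (hmN : m < N)
    (A : Matrix (Fin m) (Fin N) ℝ) (hA : A.rank = m)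
    (y : Fin m → ℝ) (p : ℝ) (hp : 2 ≤ p) (α : ℝ) (hα : 0 < α)
    (θ : ℝ → EuclideanSpace ℝ (Fin N ⊕ Fin N))
    (hθ0 : ∀ i : Fin N ⊕ Fin N, θ 0 i = α)
    (hflow : ∀ t : ℝ, 0 ≤ t →
      HasDerivWithinAt θ (-gradient (lossFun A y p) (θ t)) (Set.Ici 0) t)
    (T : ℝ) (hT : 0 ≤ T) (i : Fin N) :
    psiOf p (θ T) i =
      α ^ p * hfun p ((if p = 2 then (4 : ℝ) else p * (p - 2) * α ^ (p - 2)) *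
        ∫ t in (0:ℝ)..T,
          A.transpose.mulVec (fun j => y j - A.mulVec (psiOf p (θ t)) j) i) :=
  stmt3_general m N A y p hp α hα θ hθ0 hflow T hT i
end

section
/- Let p ≥ 2, α > 0 and z ∈ ℝ^N. Then the Hessian ∇²Q_p(z) is a diagonal positive-definite matrix whose condition number κ (largest eigenvalue divided by smallest eigenvalue) satisfies κ(∇²Q_p(z)) ≤ (1/2)(‖z‖_∞/α^p + 2)^{(2p−2)/p}. -/
noncomputable section

/-! Write `e = (2p - 2)/p` and `t = h_p⁻¹(u)`. Then `h_p'(t) = c (xᵉ + yᵉ)` and `u = x - y` for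
some `x, y > 0` with `x y ≥ 1` and `min x y ≤ 1`: for `p = 2` take `c = 1`, `x = exp t`,
`y = exp (-t)`; for `p > 2` take `c = β = p/(p-2)`, `x = (1-t)^{-β}`, `y = (1+t)^{-β}`, using
`β e = β + 1`. AM–GM with `xᵉ yᵉ ≥ 1` gives `h_p'(t) ≥ 2c`, and superadditivity of `s ↦ sᵉ`
gives `xᵉ + yᵉ ≤ max(x,y)ᵉ + 1 ≤ (|u| + 2)ᵉ`, so the ratio of two diagonal entries is at most
`c (‖z‖_∞/α^p + 2)ᵉ / (2c)`. -/

open Real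

lemma two_le_rpow_add_rpow {x y e : ℝ} (hx : 0 < x) (hy : 0 < y) (hxy : 1 ≤ x * y)
    (he : 0 ≤ e) : 2 ≤ x ^ e + y ^ e := by
  have hprod : 1 ≤ x ^ e * y ^ e := by
    rw [← mul_rpow hx.le hy.le]
    exact one_le_rpow hxy he
  nlinarith [sq_nonneg (x ^ e - y ^ e), rpow_pos_of_pos hx e, rpow_pos_of_pos hy e]

lemma rpow_add_rpow_le_abs_sub_add_two {x y e : ℝ} (hx : 0 ≤ x) (hy : 0 ≤ y)
    (hmin : min x y ≤ 1) (he : 1 ≤ e) : x ^ e + y ^ e ≤ (|x - y| + 2) ^ e := by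
  wlog hyx : y ≤ x generalizing x y
  · rw [add_comm, abs_sub_comm]
    exact this hy hx (by rwa [min_comm]) (le_of_not_ge hyx)
  have hy1 : y ≤ 1 := by rwa [min_eq_right hyx] at hmin
  calc x ^ e + y ^ e ≤ x ^ e + 1 ^ e := by gcongr
    _ ≤ (x + 1) ^ e := add_rpow_le_rpow_add hx zero_le_one he
    _ ≤ (|x - y| + 2) ^ e := by gcongr ?_ ^ _; linarith [le_abs_self (x - y)]

lemma abs_le_normInf {n : ℕ} (v : Fin n → ℝ) (i : Fin n) : |v i| ≤ normInf v :=
  le_ciSup (Set.finite_range fun i => |v i|).bddAbove i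

def RpowSumRepr (c e u D : ℝ) : Prop :=
  ∃ x y : ℝ, 0 < x ∧ 0 < y ∧ 1 ≤ x * y ∧ min x y ≤ 1 ∧ x - y = u ∧
    D = c * (x ^ e + y ^ e)

lemma RpowSumRepr.bounds {c e u D : ℝ} (h : RpowSumRepr c e u D) (hc : 0 < c) (he : 1 ≤ e) :
    2 * c ≤ D ∧ D ≤ c * (|u| + 2) ^ e := by
  obtain ⟨x, y, hx, hy, hxy, hmin, rfl, rfl⟩ := h
  exact ⟨by nlinarith [two_le_rpow_add_rpow hx hy hxy (by linarith : (0 : ℝ) ≤ e)],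
    by gcongr; exact rpow_add_rpow_le_abs_sub_add_two hx.le hy.le hmin he⟩

lemma hfun_two : hfun 2 = fun t => 2 * sinh t := by
  funext t
  simp [hfun]

lemma hfun_hInv_two (u : ℝ) : hfun 2 (hInv 2 u) = u := by
  refine Function.invFunOn_eq ⟨arsinh (u / 2), by simp [hDomain], ?_⟩
  simp only [hfun_two, sinh_arsinh]
  ring

lemma deriv_hfun_two (t : ℝ) : deriv (hfun 2) t = 2 * cosh t := by
  rw [hfun_two]
  exact ((hasDerivAt_sinh t).const_mul 2).deriv

lemma rpowSumRepr_deriv_hfun_two_hInv (u : ℝ) :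
    RpowSumRepr 1 ((2 * 2 - 2) / 2) u (deriv (hfun 2) (hInv 2 u)) := by
  set t := hInv 2 u
  have hu : 2 * sinh t = u := by simpa [hfun_two] using hfun_hInv_two u
  refine ⟨exp t, exp (-t), exp_pos t, exp_pos (-t), ?_, ?_, ?_, ?_⟩
  · rw [← exp_add, add_neg_cancel, exp_zero]
  · rcases le_total 0 t with ht | ht
    · exact min_le_of_right_le (exp_le_one_iff.mpr (neg_nonpos.mpr ht))
    · exact min_le_of_left_le (exp_le_one_iff.mpr ht)
  · rw [← hu, sinh_eq]
    ring
  · norm_num [deriv_hfun_two, cosh_eq]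
    ring

section hfun_of_two_lt

variable {p : ℝ}

lemma hfun_of_ne_two (hp : p ≠ 2) (t : ℝ) :
    hfun p t = (1 - t) ^ (-(p / (p - 2))) - (1 + t) ^ (-(p / (p - 2))) := by
  simp [hfun, hp]

lemma hfun_neg (p t : ℝ) : hfun p (-t) = -hfun p t := by
  by_cases hp : p = 2
  · simp [hfun, hp]
  · simp only [hfun_of_ne_two hp, sub_neg_eq_add, ← sub_eq_add_neg]
    ring

lemma hasDerivAt_hfun (hp : p ≠ 2) {t : ℝ} (ht : t ∈ Set.Ioo (-1 : ℝ) 1) :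
    HasDerivAt (hfun p)
      (p / (p - 2) * ((1 - t) ^ (-(p / (p - 2)) - 1) + (1 + t) ^ (-(p / (p - 2)) - 1))) t := by
  have hsub : HasDerivAt (fun t : ℝ => (1 - t) ^ (-(p / (p - 2))))
      (-1 * -(p / (p - 2)) * (1 - t) ^ (-(p / (p - 2)) - 1)) t :=
    ((hasDerivAt_id' t).const_sub 1).rpow_const (Or.inl (by linarith [ht.2]))
  have hadd : HasDerivAt (fun t : ℝ => (1 + t) ^ (-(p / (p - 2))))
      (1 * -(p / (p - 2)) * (1 + t) ^ (-(p / (p - 2)) - 1)) t :=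
    ((hasDerivAt_id' t).const_add 1).rpow_const (Or.inl (by linarith [ht.1]))
  rw [funext (hfun_of_ne_two hp)]
  exact (hsub.sub hadd).congr_deriv (by ring)

lemma exists_hfun_eq (hp : 2 < p) (u : ℝ) : ∃ t ∈ Set.Ioo (-1 : ℝ) 1, hfun p t = u := by
  have hβ : 1 ≤ p / (p - 2) := by rw [le_div_iff₀ (by linarith)]; linarith
  set a : ℝ := 1 - 1 / (|u| + 2)
  have ha1 : 0 < 1 - a := by simp only [a, sub_sub_cancel]; positivity
  have ha0 : 0 ≤ a := by
    have : 1 / (|u| + 2) ≤ 1 := by rw [div_le_one (by positivity)]; linarith [abs_nonneg u]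
    linarith
  have hfa : |u| ≤ hfun p a := by
    have hleft : |u| + 2 ≤ (1 - a) ^ (-(p / (p - 2))) := by
      calc |u| + 2 = (1 - a) ^ (-1 : ℝ) := by simp [a, rpow_neg_one]
        _ ≤ _ := rpow_le_rpow_of_exponent_ge ha1 (by linarith) (by linarith)
    have hright : (1 + a) ^ (-(p / (p - 2))) ≤ 1 :=
      rpow_le_one_of_one_le_of_nonpos (by linarith) (by linarith)
    rw [hfun_of_ne_two hp.ne']
    linarith
  have hcont : ContinuousOn (hfun p) (Set.Icc (-a) a) := fun t ht =>
    (hasDerivAt_hfun hp.ne' ⟨by linarith [ht.1], by linarith [ht.2]⟩).continuousAt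
      |>.continuousWithinAt
  obtain ⟨t, ht, htu⟩ := intermediate_value_Icc (by linarith) hcont
    ⟨by linarith [hfun_neg p a, neg_abs_le u], hfa.trans' (le_abs_self u)⟩
  exact ⟨t, ⟨by linarith [ht.1], by linarith [ht.2]⟩, htu⟩

lemma hInv_mem_Ioo_and_hfun_hInv (hp : 2 < p) (u : ℝ) :
    hInv p u ∈ Set.Ioo (-1 : ℝ) 1 ∧ hfun p (hInv p u) = u := by
  have hdom : hDomain p = Set.Ioo (-1 : ℝ) 1 := by simp [hDomain, hp.ne']
  obtain ⟨t, ht, htu⟩ := exists_hfun_eq hp u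
  have hex : ∃ t ∈ hDomain p, hfun p t = u := ⟨t, hdom ▸ ht, htu⟩
  exact ⟨hdom ▸ Function.invFunOn_mem hex, Function.invFunOn_eq hex⟩

lemma rpowSumRepr_deriv_hfun_hInv (hp : 2 < p) (u : ℝ) :
    RpowSumRepr (p / (p - 2)) ((2 * p - 2) / p) u (deriv (hfun p) (hInv p u)) := by
  obtain ⟨ht, hu⟩ := hInv_mem_Ioo_and_hfun_hInv hp u
  set t := hInv p u
  set β := p / (p - 2)
  have hβ : 0 ≤ β := div_nonneg (by linarith) (by linarith)
  have hβe : -β * ((2 * p - 2) / p) = -β - 1 := by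
    simp only [β]
    field_simp [show p - 2 ≠ 0 by linarith, show p ≠ 0 by linarith]
    ring
  have h1 : 0 < 1 - t := by linarith [ht.2]
  have h2 : 0 < 1 + t := by linarith [ht.1]
  refine ⟨(1 - t) ^ (-β), (1 + t) ^ (-β), rpow_pos_of_pos h1 _, rpow_pos_of_pos h2 _,
    ?_, ?_, ?_, ?_⟩
  · rw [← mul_rpow h1.le h2.le]
    exact one_le_rpow_of_pos_of_le_one_of_nonpos (mul_pos h1 h2) (by nlinarith [sq_nonneg t])
      (by linarith)
  · rcases le_total 0 t with ht0 | ht0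
    · exact min_le_of_right_le (rpow_le_one_of_one_le_of_nonpos (by linarith) (by linarith))
    · exact min_le_of_left_le (rpow_le_one_of_one_le_of_nonpos (by linarith) (by linarith))
  · rw [← hfun_of_ne_two hp.ne', hu]
  · rw [(hasDerivAt_hfun hp.ne' ht).deriv, ← rpow_mul h1.le, ← rpow_mul h2.le, hβe]

end hfun_of_two_lt

lemma exists_bounds_deriv_hfun_hInv {p : ℝ} (hp : 2 ≤ p) :
    ∃ c > 0, ∀ u : ℝ, 2 * c ≤ deriv (hfun p) (hInv p u) ∧
      deriv (hfun p) (hInv p u) ≤ c * (|u| + 2) ^ ((2 * p - 2) / p) := by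
  have he : 1 ≤ (2 * p - 2) / p := by rw [le_div_iff₀ (by linarith)]; linarith
  rcases hp.eq_or_lt with rfl | hp
  · exact ⟨1, one_pos, fun u => (rpowSumRepr_deriv_hfun_two_hInv u).bounds one_pos he⟩
  · have hc : 0 < p / (p - 2) := div_pos (by linarith) (by linarith)
    exact ⟨_, hc, fun u => (rpowSumRepr_deriv_hfun_hInv hp u).bounds hc he⟩

/-- Lemma `kappa_bound`: the Hessian of Q_p at z, i.e. the diagonal
matrix with i-th entry 1/(α^p h_p'(h_p^{−1}(z i/α^p))), is positive definite and its
condition number (largest diagonal entry over smallest diagonal entry) is at most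
(1/2)(‖z‖_∞/α^p + 2)^{(2p−2)/p}. -/
theorem stmt7 (N : ℕ) (p α : ℝ) (hp : 2 ≤ p) (hα : 0 < α) (z : Fin N → ℝ) :
    (Matrix.diagonal fun i : Fin N =>
        1 / (α ^ p * deriv (hfun p) (hInv p (z i / α ^ p)))).PosDef ∧
    ∀ i j : Fin N,
      (1 / (α ^ p * deriv (hfun p) (hInv p (z i / α ^ p)))) /
        (1 / (α ^ p * deriv (hfun p) (hInv p (z j / α ^ p)))) ≤
      (1 / 2) * (normInf z / α ^ p + 2) ^ ((2 * p - 2) / p) := by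
  obtain ⟨c, hc, hbounds⟩ := exists_bounds_deriv_hfun_hInv hp
  have hαp : 0 < α ^ p := rpow_pos_of_pos hα p
  have hD : ∀ i, 0 < deriv (hfun p) (hInv p (z i / α ^ p)) := fun i =>
    by linarith [(hbounds (z i / α ^ p)).1]
  refine ⟨Matrix.posDef_diagonal_iff.mpr fun i => one_div_pos.mpr (mul_pos hαp (hD i)),
    fun i j => ?_⟩
  have hzj : |z j / α ^ p| + 2 ≤ normInf z / α ^ p + 2 := by
    rw [abs_div, abs_of_pos hαp]
    gcongr
    exact abs_le_normInf z j
  have he : 0 ≤ (2 * p - 2) / p := div_nonneg (by linarith) (by linarith)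
  calc (1 / (α ^ p * deriv (hfun p) (hInv p (z i / α ^ p)))) /
        (1 / (α ^ p * deriv (hfun p) (hInv p (z j / α ^ p))))
      = deriv (hfun p) (hInv p (z j / α ^ p)) / deriv (hfun p) (hInv p (z i / α ^ p)) := by
        field_simp
    _ ≤ c * (normInf z / α ^ p + 2) ^ ((2 * p - 2) / p) / (2 * c) := by
        refine div_le_div₀ ?_ ((hbounds _).2.trans (by gcongr)) (by positivity) (hbounds _).1
        exact mul_nonneg hc.le (rpow_nonneg (by linarith [abs_nonneg (z j / α ^ p)]) _)
    _ = (1 / 2) * (normInf z / α ^ p + 2) ^ ((2 * p - 2) / p) := by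
        field_simp
end
end

section
/- Let A ∈ ℝ^{m×N}. Then there exists a constant 𝒦(A) ≥ 1, depending only on A, such that for every N×N diagonal matrix D with strictly positive diagonal entries and all u, v ∈ ℝ^N satisfying P_{Null(A)} D (u + P_{Null(A)} v) = 0, it holds that ‖u + P_{Null(A)} v‖₂ ≤ 𝒦(A)‖u‖₂. -/
/-!
Put `x = P w` and `r = w - P w` for `w = u + P v`. Then `x ∈ Null(A)` and `D (x + r) ⊥ Null(A)`,
so if the columns of `B` form a basis of `Null(A)`, then `x = B s` where `s` solves the weighted
normal equations `Bᵀ D B s = -Bᵀ D r`. Cramer's rule together with the Cauchy–Binet formula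
writes `B s` as a convex combination, with weights `(∏ a, d (f a)) * det (B_f) ^ 2`, of the
vectors `B B_f⁻¹ (-r)_f` obtained by solving the square subsystems on the rows `f`.
These vectors do not depend on `D`, which gives `‖x‖ ≤ C ‖r‖` uniformly in `D`
(Todd–Stewart). Finally `r = u - P u`, and `‖u - P u‖ ≤ ‖u‖` because `P` is an orthogonal
projection.
-/

open Matrix
open scoped Nat

namespace Matrix
variable {n R : Type*} [Fintype n] [CommRing R] {k : ℕ}

theorem det_transpose_mul_eq_sum (B C : Matrix n (Fin k) R) :
    (Cᵀ * B).det = ∑ f : Fin k → n, (∏ a, C (f a) a) * (B.submatrix f id).det := by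
  have hrows : Cᵀ * B = of fun a => ∑ i, C i a • B i := by
    ext a j; simp [mul_apply, Finset.sum_apply]
  have hexpand := (detRowAlternating (R := R) (n := Fin k)).toMultilinearMap.map_sum
    (fun a i => C i a • B i)
  rw [hrows]
  refine hexpand.trans (Finset.sum_congr rfl fun f _ => ?_)
  exact (detRowAlternating (R := R) (n := Fin k)).toMultilinearMap.map_smul_univ _ _

theorem sum_prod_comp_perm_mul_det_submatrix (B C : Matrix n (Fin k) R) (τ : Equiv.Perm (Fin k)) :
    ∑ f : Fin k → n, (∏ a, C (f (τ a)) a) * (B.submatrix f id).det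
      = Equiv.Perm.sign τ • (Cᵀ * B).det := by
  rw [det_transpose_mul_eq_sum, Finset.smul_sum,
    ← Equiv.sum_comp (τ.arrowCongr (Equiv.refl n))]
  refine Finset.sum_congr rfl fun g _ => ?_
  have hperm : B.submatrix (τ.arrowCongr (Equiv.refl n) g) id
      = (B.submatrix g id).submatrix τ.symm id := rfl
  have hprod : ∏ a, C (τ.arrowCongr (Equiv.refl n) g (τ a)) a = ∏ a, C (g a) a := by simp
  rw [hprod, hperm, det_permute, Equiv.Perm.sign_symm, Units.smul_def, zsmul_eq_mul]
  ring

/-- Cauchy–Binet, summed over all maps `Fin k → n` rather than over `k`-element sets of rows. -/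
theorem factorial_mul_det_transpose_mul (B C : Matrix n (Fin k) R) :
    (k ! : R) * (Cᵀ * B).det
      = ∑ f : Fin k → n, (C.submatrix f id).det * (B.submatrix f id).det := by
  simp_rw [det_apply (C.submatrix _ id), Finset.sum_mul, submatrix_apply, id, smul_mul_assoc]
  rw [Finset.sum_comm]
  simp_rw [← Finset.smul_sum, sum_prod_comp_perm_mul_det_submatrix, smul_smul,
    Int.units_mul_self, one_smul, Finset.sum_const, Finset.card_univ,
    Fintype.card_perm, Fintype.card_fin, nsmul_eq_mul]

theorem factorial_smul_cramer_transpose_mul (B C : Matrix n (Fin k) R) (c : n → R) :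
    (k ! : R) • cramer (Cᵀ * B) (Cᵀ *ᵥ c)
      = ∑ f : Fin k → n, (C.submatrix f id).det • cramer (B.submatrix f id) (c ∘ f) := by
  ext ℓ
  have hsub : ∀ f : Fin k → n,
      (B.updateCol ℓ c).submatrix f id = (B.submatrix f id).updateCol ℓ (c ∘ f) := by
    intro f; ext a b; simp [updateCol_apply]
  simp only [Pi.smul_apply, Finset.sum_apply, cramer_apply, ← mul_updateCol, smul_eq_mul,
    factorial_mul_det_transpose_mul, hsub]

section Cramer
variable [DecidableEq n]

theorem cramer_mul_mulVec (E X : Matrix n n R) (z : n → R) :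
    cramer (E * X) (E *ᵥ z) = E.det • cramer X z := by
  ext i
  simp only [cramer_apply, ← mul_updateCol, det_mul, Pi.smul_apply, smul_eq_mul]

theorem cramer_mulVec_self (M : Matrix n n R) (s : n → R) : cramer M (M *ᵥ s) = M.det • s := by
  rw [cramer_eq_adjugate_mulVec, mulVec_mulVec, adjugate_mul, smul_mulVec, one_mulVec]

theorem submatrix_diagonal_mul (d : n → R) (B : Matrix n (Fin k) R) (f : Fin k → n) :
    (diagonal d * B).submatrix f id = diagonal (d ∘ f) * B.submatrix f id := by
  ext a b
  simp [diagonal_mul]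

theorem factorial_mul_det_transpose_mul_diagonal_mul (B : Matrix n (Fin k) R) (d : n → R) :
    (k ! : R) * (Bᵀ * (diagonal d * B)).det
      = ∑ f : Fin k → n, (∏ a, d (f a)) * (B.submatrix f id).det ^ 2 := by
  simp only [factorial_mul_det_transpose_mul, submatrix_diagonal_mul, det_mul, det_diagonal,
    Function.comp_apply]
  exact Finset.sum_congr rfl fun f _ => by ring

theorem factorial_smul_cramer_transpose_mul_diagonal_mul (B : Matrix n (Fin k) R) (d c : n → R) :
    (k ! : R) • cramer (Bᵀ * (diagonal d * B)) (Bᵀ *ᵥ (diagonal d *ᵥ c))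
      = ∑ f : Fin k → n,
          ((∏ a, d (f a)) * (B.submatrix f id).det) • cramer (B.submatrix f id) (c ∘ f) := by
  rw [factorial_smul_cramer_transpose_mul]
  refine Finset.sum_congr rfl fun f _ => ?_
  have hc : (diagonal d *ᵥ c) ∘ f = diagonal (d ∘ f) *ᵥ (c ∘ f) := by
    ext a; simp [mulVec_diagonal]
  rw [submatrix_diagonal_mul, hc, cramer_mul_mulVec, det_diagonal, smul_smul]
  simp only [Function.comp_apply, mul_comm]

end Cramer
section Field
variable {K : Type*} [Field K] [DecidableEq n]

/-- `basicSolution B f *ᵥ r = B s`, where `s` solves the square subsystem of `B s = r` on the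
rows `f`. -/
noncomputable def basicSolution (B : Matrix n (Fin k) K) (f : Fin k → n) : Matrix n n K :=
  B * (B.submatrix f id)⁻¹ * (1 : Matrix n n K).submatrix f id

theorem det_smul_mulVec_cramer_submatrix (B : Matrix n (Fin k) K) (f : Fin k → n) (r : n → K) :
    (B.submatrix f id).det • (B *ᵥ cramer (B.submatrix f id) (r ∘ f))
      = (B.submatrix f id).det ^ 2 • (basicSolution B f *ᵥ r) := by
  by_cases hf : (B.submatrix f id).det = 0
  · simp [hf]
  have hsel : (1 : Matrix n n K).submatrix f id *ᵥ r = r ∘ f := by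
    ext a; simp [mulVec, dotProduct, one_apply]
  rw [← det_smul_inv_mulVec_eq_cramer _ _ (isUnit_iff_ne_zero.mpr hf), basicSolution,
    ← mulVec_mulVec, ← mulVec_mulVec, hsel, mulVec_smul, smul_smul, sq]

theorem factorial_mul_det_smul_mulVec_eq_sum (B : Matrix n (Fin k) K) (d : n → K)
    (s : Fin k → K) (r : n → K) (h : Bᵀ *ᵥ (diagonal d *ᵥ (B *ᵥ s + r)) = 0) :
    ((k ! : K) * (Bᵀ * (diagonal d * B)).det) • (B *ᵥ s)
      = ∑ f : Fin k → n,
          ((∏ a, d (f a)) * (B.submatrix f id).det ^ 2) • (basicSolution B f *ᵥ -r) := by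
  have hnormal : (Bᵀ * (diagonal d * B)) *ᵥ s = Bᵀ *ᵥ (diagonal d *ᵥ -r) := by
    rw [← mulVec_mulVec, ← mulVec_mulVec, mulVec_neg, mulVec_neg, eq_neg_iff_add_eq_zero,
      ← mulVec_add, ← mulVec_add, h]
  rw [mul_smul, ← mulVec_smul, ← mulVec_smul, ← cramer_mulVec_self, hnormal,
    factorial_smul_cramer_transpose_mul_diagonal_mul, mulVec_sum]
  refine Finset.sum_congr rfl fun f _ => ?_
  rw [mulVec_smul, mul_smul, det_smul_mulVec_cramer_submatrix, smul_smul]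

end Field
end Matrix

theorem Submodule.exists_matrix_injective_range_eq {K n : Type*} [Field K] [Fintype n]
    (V : Submodule K (n → K)) :
    ∃ (k : ℕ) (B : Matrix n (Fin k) K),
      Function.Injective B.mulVec ∧ LinearMap.range B.mulVecLin = V := by
  let b := Module.finBasis K V
  let g : (Fin (Module.finrank K V) → K) →ₗ[K] n → K := V.subtype ∘ₗ b.equivFun.symm.toLinearMap
  have hg : (LinearMap.toMatrix' g).mulVecLin = g := toLin'_toMatrix' g
  refine ⟨_, LinearMap.toMatrix' g, ?_, ?_⟩
  · change Function.Injective (LinearMap.toMatrix' g).mulVecLin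
    rw [hg]
    exact V.subtype_injective.comp b.equivFun.symm.injective
  · rw [hg, LinearMap.range_comp_of_range_eq_top _ (LinearEquiv.range _), Submodule.range_subtype]

section Norm2
variable {n : ℕ}

theorem norm2_eq_norm_toLp (v : Fin n → ℝ) : norm2 v = ‖WithLp.toLp 2 v‖ := by
  simp [EuclideanSpace.norm_eq, norm2]

theorem norm2_eq_sqrt_dotProduct (v : Fin n → ℝ) : norm2 v = √(v ⬝ᵥ v) := by
  simp [norm2, dotProduct, sq]

theorem norm2_add_le (x y : Fin n → ℝ) : norm2 (x + y) ≤ norm2 x + norm2 y := by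
  simpa only [norm2_eq_norm_toLp, WithLp.toLp_add] using norm_add_le _ _

theorem norm2_neg (v : Fin n → ℝ) : norm2 (-v) = norm2 v := by
  simp only [norm2_eq_norm_toLp, WithLp.toLp_neg, norm_neg]

theorem norm2_mulVec_le (G : Matrix (Fin n) (Fin n) ℝ) (v : Fin n → ℝ) :
    norm2 (G *ᵥ v) ≤ ‖toEuclideanCLM (𝕜 := ℝ) G‖ * norm2 v := by
  simpa only [norm2_eq_norm_toLp, toEuclideanCLM_toLp]
    using (toEuclideanCLM (𝕜 := ℝ) G).le_opNorm (WithLp.toLp 2 v)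

theorem norm2_le_of_smul_eq_sum_smul {ι : Type*} [Fintype ι] (w : ι → ℝ)
    (x : Fin n → ℝ) (y : ι → Fin n → ℝ) {R : ℝ} (hw : ∀ i, 0 ≤ w i) (hpos : 0 < ∑ i, w i)
    (hx : (∑ i, w i) • x = ∑ i, w i • y i) (hy : ∀ i, norm2 (y i) ≤ R) : norm2 x ≤ R := by
  simp only [norm2_eq_norm_toLp] at hy ⊢
  refine le_of_mul_le_mul_left ?_ hpos
  calc (∑ i, w i) * ‖WithLp.toLp 2 x‖ = ‖∑ i, w i • WithLp.toLp 2 (y i)‖ := by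
        rw [← abs_of_pos hpos, ← Real.norm_eq_abs, ← norm_smul, ← WithLp.toLp_smul, hx,
          WithLp.toLp_sum]
        simp only [WithLp.toLp_smul]
    _ ≤ ∑ i, w i * ‖WithLp.toLp 2 (y i)‖ := by
        refine (norm_sum_le _ _).trans_eq (Finset.sum_congr rfl fun i _ => ?_)
        rw [norm_smul, Real.norm_of_nonneg (hw i)]
    _ ≤ (∑ i, w i) * R := by
        rw [Finset.sum_mul]
        exact Finset.sum_le_sum fun i _ => mul_le_mul_of_nonneg_left (hy i) (hw i)

theorem dotProduct_mulVec_eq_of_transpose_eq {P : Matrix (Fin n) (Fin n) ℝ}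
    (hP : Pᵀ = P) (x y : Fin n → ℝ) : x ⬝ᵥ (P *ᵥ y) = (P *ᵥ x) ⬝ᵥ y := by
  rw [dotProduct_mulVec, ← mulVec_transpose, hP]

theorem norm2_sub_mulVec_le {P : Matrix (Fin n) (Fin n) ℝ} (hP : Pᵀ = P)
    (hPP : ∀ x, P *ᵥ (P *ᵥ x) = P *ᵥ x) (u : Fin n → ℝ) : norm2 (u - P *ᵥ u) ≤ norm2 u := by
  set q := P *ᵥ u
  have horth : (u - q) ⬝ᵥ q = 0 := by
    have hqq : q ⬝ᵥ q = u ⬝ᵥ q := by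
      rw [dotProduct_mulVec_eq_of_transpose_eq hP, hPP, dotProduct_comm]
    rw [sub_dotProduct, hqq, sub_self]
  have hsq : u ⬝ᵥ u = (u - q) ⬝ᵥ (u - q) + q ⬝ᵥ q := by
    nth_rewrite 1 2 [← sub_add_cancel u q]
    rw [add_dotProduct, dotProduct_add, dotProduct_add, horth,
      dotProduct_comm q (u - q), horth]
    ring
  rw [norm2_eq_sqrt_dotProduct, norm2_eq_sqrt_dotProduct]
  have hq : 0 ≤ q ⬝ᵥ q := Finset.sum_nonneg fun i _ => mul_self_nonneg (q i)
  exact Real.sqrt_le_sqrt (by linarith)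

end Norm2

theorem exists_weighted_leastSquares_bound {N k : ℕ} (B : Matrix (Fin N) (Fin k) ℝ)
    (hB : Function.Injective B.mulVec) :
    ∃ C, 0 ≤ C ∧ ∀ d : Fin N → ℝ, (∀ i, 0 < d i) → ∀ s r,
      Bᵀ *ᵥ (diagonal d *ᵥ (B *ᵥ s + r)) = 0 → norm2 (B *ᵥ s) ≤ C * norm2 r := by
  obtain ⟨C, hC⟩ :=
    Finite.exists_le fun f : Fin k → Fin N => ‖toEuclideanCLM (𝕜 := ℝ) (basicSolution B f)‖
  refine ⟨max C 0, le_max_right _ _, fun d hd s r h => ?_⟩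
  have hdet : 0 < (Bᵀ * (diagonal d * B)).det := by
    have hpd := (posDef_diagonal_iff.mpr hd).conjTranspose_mul_mul_same hB
    rw [conjTranspose_eq_transpose_of_trivial, Matrix.mul_assoc] at hpd
    exact hpd.det_pos
  refine norm2_le_of_smul_eq_sum_smul (fun f => (∏ a, d (f a)) * (B.submatrix f id).det ^ 2) _ _
    (fun f => mul_nonneg (Finset.prod_nonneg fun a _ => (hd (f a)).le) (sq_nonneg _)) ?_ ?_
    fun f => (norm2_mulVec_le (basicSolution B f) (-r)).trans ?_
  · rw [← factorial_mul_det_transpose_mul_diagonal_mul]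
    exact mul_pos (by positivity) hdet
  · rw [← factorial_mul_det_transpose_mul_diagonal_mul]
    exact factorial_mul_det_smul_mulVec_eq_sum B d s r h
  · rw [norm2_neg]
    exact mul_le_mul_of_nonneg_right (le_max_of_le_left (hC f)) (Real.sqrt_nonneg _)

/-- Lemma `K_lemma`, with the Todd–Stewart constant: given A, with
P the orthogonal projection onto Null(A) (characterized by: range(P) ⊆ Null(A),
P fixes Null(A), and P is symmetric), there is a constant 𝒦(A) ≥ 1 such that for
every diagonal matrix D with strictly positive diagonal and all u, v with
P D (u + P v) = 0 one has ‖u + P v‖₂ ≤ 𝒦(A)‖u‖₂. -/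
theorem stmt9 (m N : ℕ) (A : Matrix (Fin m) (Fin N) ℝ)
    (P : Matrix (Fin N) (Fin N) ℝ)
    (hP1 : ∀ x : Fin N → ℝ, A.mulVec (P.mulVec x) = 0)
    (hP2 : ∀ x : Fin N → ℝ, A.mulVec x = 0 → P.mulVec x = x)
    (hP3 : P.transpose = P) :
    ∃ K : ℝ, 1 ≤ K ∧
      ∀ d : Fin N → ℝ, (∀ i, 0 < d i) →
      ∀ u v : Fin N → ℝ,
        P.mulVec ((Matrix.diagonal d).mulVec (u + P.mulVec v)) = 0 →
        norm2 (u + P.mulVec v) ≤ K * norm2 u := by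
  obtain ⟨k, B, hB, hrange⟩ := (LinearMap.ker A.mulVecLin).exists_matrix_injective_range_eq
  obtain ⟨C, hC0, hC⟩ := exists_weighted_leastSquares_bound B hB
  have hPP : ∀ x, P *ᵥ (P *ᵥ x) = P *ᵥ x := fun x => hP2 _ (hP1 x)
  have hPB : P * B = B := ext_iff_mulVec.mpr fun s => by
    rw [← mulVec_mulVec]
    exact hP2 _ (LinearMap.mem_ker.mp (hrange ▸ LinearMap.mem_range_self B.mulVecLin s))
  refine ⟨C + 1, by linarith, fun d hd u v hPD => ?_⟩
  set w := u + P *ᵥ v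
  obtain ⟨s, hs⟩ : ∃ s, B *ᵥ s = P *ᵥ w :=
    (hrange ▸ LinearMap.mem_ker.mpr (hP1 w) : P *ᵥ w ∈ LinearMap.range B.mulVecLin)
  have hnormal : Bᵀ *ᵥ (diagonal d *ᵥ (B *ᵥ s + (w - P *ᵥ w))) = 0 := by
    rw [hs, add_sub_cancel, ← hPB, transpose_mul, ← mulVec_mulVec, hP3, hPD, mulVec_zero]
  have hres : w - P *ᵥ w = u - P *ᵥ u := by
    simp only [w, mulVec_add, hPP]
    abel
  have hproj : norm2 (P *ᵥ w) ≤ C * norm2 u := by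
    have hbound := hC d hd s _ hnormal
    rw [hs, hres] at hbound
    exact hbound.trans (mul_le_mul_of_nonneg_left (norm2_sub_mulVec_le hP3 hPP u) hC0)
  calc norm2 w = norm2 (P *ᵥ w + (w - P *ᵥ w)) := by rw [add_sub_cancel]
    _ ≤ norm2 (P *ᵥ w) + norm2 (u - P *ᵥ u) := hres ▸ norm2_add_le _ _
    _ ≤ C * norm2 u + norm2 u := add_le_add hproj (norm2_sub_mulVec_le hP3 hPP u)
    _ = (C + 1) * norm2 u := by ring
end

section
/- Let A ∈ ℝ^{m×N} with rank(A) = m, y ∈ ℝ^m, p ≥ 2 and α > 0. Then the maximizer over 𝒰(A,y) of H (if p = 2), respectively of ‖·‖_{2/p} (if p > 2), exists and is unique, and it equals g*, the unique minimizer of G_p over 𝒰(A,y). In particular 𝒲_p(A,y) = g*. -/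
/-!
Every point of 𝒰(A,y) has the same ℓ¹ norm, and `G_p` is an affine function of `‖z‖₁`
minus a positive multiple of `∑ φ(|zᵢ|)`, with `φ = negMulLog` for `p = 2` and `φ = t^{2/p}`
for `p > 2`. Hence on 𝒰(A,y), minimizing `G_p` is the same as maximizing `∑ φ(|zᵢ|)`.
Uniqueness of the maximizer comes from convexity of 𝒰(A,y): two points `z, w` of it satisfy
`|zᵢ + wᵢ| = |zᵢ| + |wᵢ|` for every `i`, so `|(z + w)/2|ᵢ = (|zᵢ| + |wᵢ|)/2` and strict
concavity of `φ` makes the midpoint strictly better unless `z = w`.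
-/

open Finset

lemma eq_of_abs_eq_of_abs_add_eq {a b : ℝ} (h : |a| = |b|) (hadd : |a + b| = |a| + |b|) :
    a = b := by
  rcases abs_add_eq_add_abs_iff a b |>.1 hadd with ⟨ha, hb⟩ | ⟨ha, hb⟩
  · rwa [abs_of_nonneg ha, abs_of_nonneg hb] at h
  · rw [abs_of_nonpos ha, abs_of_nonpos hb] at h
    linarith

lemma StrictConcaveOn.add_div_two_lt {s : Set ℝ} {φ : ℝ → ℝ} (hφ : StrictConcaveOn ℝ s φ)
    {a b : ℝ} (ha : a ∈ s) (hb : b ∈ s) (hab : a ≠ b) :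
    (φ a + φ b) / 2 < φ ((a + b) / 2) := by
  have h := hφ.2 ha hb hab (by norm_num : (0 : ℝ) < 1 / 2) (by norm_num : (0 : ℝ) < 1 / 2)
    (by norm_num)
  simp only [smul_eq_mul, one_div_mul_eq_div, ← add_div] at h
  linarith

lemma ConcaveOn.add_div_two_le {s : Set ℝ} {φ : ℝ → ℝ} (hφ : ConcaveOn ℝ s φ)
    {a b : ℝ} (ha : a ∈ s) (hb : b ∈ s) :
    (φ a + φ b) / 2 ≤ φ ((a + b) / 2) := by
  have h := hφ.2 ha hb (by norm_num : (0 : ℝ) ≤ 1 / 2) (by norm_num : (0 : ℝ) ≤ 1 / 2)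
    (by norm_num)
  simp only [smul_eq_mul, one_div_mul_eq_div, ← add_div] at h
  linarith

lemma norm1_add_smul_le {n : ℕ} (z w : Fin n → ℝ) {a b : ℝ} (ha : 0 ≤ a) (hb : 0 ≤ b) :
    norm1 (a • z + b • w) ≤ a * norm1 z + b * norm1 w := by
  simp only [norm1, mul_sum, ← sum_add_distrib]
  refine sum_le_sum fun i _ => ?_
  calc |a * z i + b * w i| ≤ |a * z i| + |b * w i| := abs_add_le _ _
    _ = a * |z i| + b * |w i| := by rw [abs_mul, abs_mul, abs_of_nonneg ha, abs_of_nonneg hb]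

namespace BPset

variable {m N : ℕ} {A : Matrix (Fin m) (Fin N) ℝ} {y : Fin m → ℝ} {z w : Fin N → ℝ}

lemma norm1_eq (hz : z ∈ BPset A y) (hw : w ∈ BPset A y) : norm1 z = norm1 w :=
  le_antisymm (hz.2 w hw.1) (hw.2 z hz.1)

lemma convex : Convex ℝ (BPset A y) := by
  intro z hz w hw a b ha hb hab
  have hmem : A.mulVec (a • z + b • w) = y := by
    rw [Matrix.mulVec_add, Matrix.mulVec_smul, Matrix.mulVec_smul, hz.1, hw.1, ← add_smul, hab,
      one_smul]
  refine ⟨hmem, fun u hu => ?_⟩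
  calc norm1 (a • z + b • w) ≤ a * norm1 z + b * norm1 w := norm1_add_smul_le z w ha hb
    _ = norm1 z := by rw [← norm1_eq hz hw, ← add_mul, hab, one_mul]
    _ ≤ norm1 u := hz.2 u hu

lemma midpoint_mem (hz : z ∈ BPset A y) (hw : w ∈ BPset A y) :
    (fun i => (z i + w i) / 2) ∈ BPset A y := by
  convert convex hz hw (by norm_num : (0 : ℝ) ≤ 1 / 2) (by norm_num : (0 : ℝ) ≤ 1 / 2)
    (by norm_num) using 1
  funext i
  simp only [Pi.add_apply, Pi.smul_apply, smul_eq_mul]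
  ring

lemma abs_add_eq (hz : z ∈ BPset A y) (hw : w ∈ BPset A y) (i : Fin N) :
    |z i + w i| = |z i| + |w i| := by
  have hmid : norm1 z ≤ norm1 (fun i => (z i + w i) / 2) := hz.2 _ (midpoint_mem hz hw).1
  have hsum : ∑ i, (|z i| + |w i|) ≤ ∑ i, |z i + w i| := by
    have hzw := norm1_eq hz hw
    simp only [norm1, abs_div, abs_two, ← sum_div] at hmid hzw
    rw [sum_add_distrib]
    linarith
  exact (sum_eq_sum_iff_of_le fun i _ => abs_add_le (z i) (w i)).1
    (le_antisymm (sum_le_sum fun i _ => abs_add_le (z i) (w i)) hsum) i (mem_univ i)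

lemma sum_add_div_two_lt {φ : ℝ → ℝ} (hφ : StrictConcaveOn ℝ (Set.Ici 0) φ)
    (hz : z ∈ BPset A y) (hw : w ∈ BPset A y) (hzw : z ≠ w) :
    (∑ i, φ |z i| + ∑ i, φ |w i|) / 2 < ∑ i, φ |(z i + w i) / 2| := by
  have habs : ∀ i, |(z i + w i) / 2| = (|z i| + |w i|) / 2 := fun i => by
    rw [abs_div, abs_two, abs_add_eq hz hw]
  obtain ⟨i₀, hi₀⟩ : ∃ i, |z i| ≠ |w i| := by
    by_contra! h
    exact hzw (funext fun i => eq_of_abs_eq_of_abs_add_eq (h i) (abs_add_eq hz hw i))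
  simp only [habs, ← sum_add_distrib, sum_div]
  exact sum_lt_sum
    (fun i _ => hφ.concaveOn.add_div_two_le (Set.mem_Ici.2 (abs_nonneg (z i)))
      (Set.mem_Ici.2 (abs_nonneg (w i))))
    ⟨i₀, mem_univ _, hφ.add_div_two_lt (Set.mem_Ici.2 (abs_nonneg _))
      (Set.mem_Ici.2 (abs_nonneg _)) hi₀⟩

theorem existsUnique_of_strictConcaveOn {φ : ℝ → ℝ} (hφ : StrictConcaveOn ℝ (Set.Ici 0) φ)
    {g : Fin N → ℝ} (hg : g ∈ BPset A y)
    (hmax : ∀ z ∈ BPset A y, ∑ i, φ |z i| ≤ ∑ i, φ |g i|) :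
    ∃! w, w ∈ BPset A y ∧ ∀ z ∈ BPset A y, ∑ i, φ |z i| ≤ ∑ i, φ |w i| := by
  refine ⟨g, ⟨hg, hmax⟩, fun w ⟨hw, hwmax⟩ => ?_⟩
  by_contra hwg
  have hlt := sum_add_div_two_lt hφ hw hg hwg
  have hmid := hmax _ (midpoint_mem hw hg)
  linarith [hwmax g hg]

end BPset

lemma Hent_eq_sum_negMulLog {n : ℕ} (z : Fin n → ℝ) :
    Hent z = ∑ i, Real.negMulLog |z i| := by
  simp only [Hent, Real.negMulLog, ← sum_neg_distrib, neg_mul]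

lemma Gfun_two {n : ℕ} {α : ℝ} (hα : 0 < α) (z : Fin n → ℝ) :
    Gfun 2 α z = -Hent z - (Real.log (α ^ (2 : ℝ)) + 1) * norm1 z := by
  rw [Gfun, mul_sum]
  set c := α ^ (2 : ℝ)
  have hc : 0 < c := Real.rpow_pos_of_pos hα 2
  have hterm : ∀ u : ℝ, c * gfun 2 (u / c) = |u| * Real.log |u| - (Real.log c + 1) * |u| := by
    intro u
    rcases eq_or_ne u 0 with rfl | hu
    · simp [gfun]
    have hu' : |u| ≠ 0 := abs_ne_zero.2 hu
    rw [gfun, if_pos rfl, if_neg (div_ne_zero hu hc.ne'), abs_div, abs_of_pos hc,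
      Real.log_div (div_ne_zero hu' hc.ne') (Real.exp_ne_zero 1), Real.log_div hu' hc.ne',
      Real.log_exp]
    field_simp
    ring
  simp only [hterm, sum_sub_distrib, Hent, norm1, mul_sum]
  ring

lemma Gfun_of_two_lt {n : ℕ} {p α : ℝ} (hp : 2 < p) (hα : 0 < α) (z : Fin n → ℝ) :
    Gfun p α z = norm1 z - p / 2 * (α ^ p) ^ (1 - 2 / p) * ∑ i, |z i| ^ (2 / p) := by
  rw [Gfun, mul_sum]
  set c := α ^ p
  have hc : 0 < c := Real.rpow_pos_of_pos hα p
  have hterm : ∀ u : ℝ, c * gfun p (u / c) = |u| - p / 2 * c ^ (1 - 2 / p) * |u| ^ (2 / p) := by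
    intro u
    have hc' : c ^ (2 / p) ≠ 0 := (Real.rpow_pos_of_pos hc _).ne'
    rw [gfun, if_neg hp.ne', abs_div, abs_of_pos hc, Real.div_rpow (abs_nonneg _) hc.le,
      Real.rpow_sub hc, Real.rpow_one]
    field_simp
  simp only [hterm, sum_sub_distrib, norm1, mul_sum]

lemma normr_le_normr_iff {n : ℕ} {r : ℝ} (hr : 0 < r) (z w : Fin n → ℝ) :
    normr r z ≤ normr r w ↔ ∑ i, |z i| ^ r ≤ ∑ i, |w i| ^ r :=
  Real.rpow_le_rpow_iff (sum_nonneg fun i _ => by positivity)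
    (sum_nonneg fun i _ => by positivity) (one_div_pos.2 hr)

section

variable {m N : ℕ} {A : Matrix (Fin m) (Fin N) ℝ} {y : Fin m → ℝ} {α : ℝ} {z g : Fin N → ℝ}

lemma Hent_le_of_Gfun_two_le (hα : 0 < α) (hz : z ∈ BPset A y) (hg : g ∈ BPset A y)
    (h : Gfun 2 α g ≤ Gfun 2 α z) : Hent z ≤ Hent g := by
  rw [Gfun_two hα, Gfun_two hα, BPset.norm1_eq hz hg] at h
  linarith

lemma sum_rpow_le_of_Gfun_le {p : ℝ} (hp : 2 < p) (hα : 0 < α) (hz : z ∈ BPset A y)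
    (hg : g ∈ BPset A y) (h : Gfun p α g ≤ Gfun p α z) :
    ∑ i, |z i| ^ (2 / p) ≤ ∑ i, |g i| ^ (2 / p) := by
  rw [Gfun_of_two_lt hp hα, Gfun_of_two_lt hp hα, BPset.norm1_eq hz hg] at h
  have hκ : 0 < p / 2 * (α ^ p) ^ (1 - 2 / p) := by
    have : 0 < p := by linarith
    positivity
  exact le_of_mul_le_mul_left (by linarith) hκ

end

theorem stmt11_general (m N : ℕ)
    (A : Matrix (Fin m) (Fin N) ℝ)
    (y : Fin m → ℝ) (p : ℝ) (α : ℝ) (hα : 0 < α)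
    (gstar : Fin N → ℝ)
    (hg1 : gstar ∈ BPset A y)
    (hg2 : ∀ z ∈ BPset A y, Gfun p α gstar ≤ Gfun p α z) :
    (p = 2 →
      (∃! w : Fin N → ℝ, w ∈ BPset A y ∧ ∀ z ∈ BPset A y, Hent z ≤ Hent w) ∧
      ∀ z ∈ BPset A y, Hent z ≤ Hent gstar) ∧
    (2 < p →
      (∃! w : Fin N → ℝ,
          w ∈ BPset A y ∧ ∀ z ∈ BPset A y, normr (2 / p) z ≤ normr (2 / p) w) ∧
      ∀ z ∈ BPset A y, normr (2 / p) z ≤ normr (2 / p) gstar) := by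
  refine ⟨fun hp => ?_, fun hp => ?_⟩
  · subst hp
    have hmax : ∀ z ∈ BPset A y, Hent z ≤ Hent gstar :=
      fun z hz => Hent_le_of_Gfun_two_le hα hz hg1 (hg2 z hz)
    refine ⟨?_, hmax⟩
    simp only [Hent_eq_sum_negMulLog] at hmax ⊢
    exact BPset.existsUnique_of_strictConcaveOn Real.strictConcaveOn_negMulLog hg1 hmax
  · have hr : 0 < 2 / p := by positivity
    have hmax : ∀ z ∈ BPset A y, ∑ i, |z i| ^ (2 / p) ≤ ∑ i, |gstar i| ^ (2 / p) :=
      fun z hz => sum_rpow_le_of_Gfun_le hp hα hz hg1 (hg2 z hz)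
    simp only [normr_le_normr_iff hr]
    exact ⟨BPset.existsUnique_of_strictConcaveOn
      (Real.strictConcaveOn_rpow hr ((div_lt_one (by positivity)).2 hp)) hg1 hmax, hmax⟩

/-- Proposition `Wp_Gp_id`: the maximizer over 𝒰(A,y) of the
entropy H (if p = 2), resp. of ‖·‖_{2/p} (if p > 2), exists and is unique and equals
g*, the minimizer of G_p over 𝒰(A,y); i.e. 𝒲_p(A,y) = g*. -/
theorem stmt11 (m N : ℕ) (hm : 1 ≤ m) (hmN : m < N)
    (A : Matrix (Fin m) (Fin N) ℝ) (hA : A.rank = m)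
    (y : Fin m → ℝ) (p : ℝ) (hp : 2 ≤ p) (α : ℝ) (hα : 0 < α)
    (gstar : Fin N → ℝ)
    (hg1 : gstar ∈ BPset A y)
    (hg2 : ∀ z ∈ BPset A y, Gfun p α gstar ≤ Gfun p α z) :
    (p = 2 →
      (∃! w : Fin N → ℝ, w ∈ BPset A y ∧ ∀ z ∈ BPset A y, Hent z ≤ Hent w) ∧
      ∀ z ∈ BPset A y, Hent z ≤ Hent gstar) ∧
    (2 < p →
      (∃! w : Fin N → ℝ,
          w ∈ BPset A y ∧ ∀ z ∈ BPset A y, normr (2 / p) z ≤ normr (2 / p) w) ∧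
      ∀ z ∈ BPset A y, normr (2 / p) z ≤ normr (2 / p) gstar) :=
  stmt11_general m N A y p α hα gstar hg1 hg2
end

section
/- Let A ∈ ℝ^{m×N} with rank(A) = m and y ∈ ℝ^m, and let R(A,y) = min{‖z‖₁ : Az = y}. Then there exists s ∈ {−1,1}^N such that 𝒰(A,y) = {z ∈ ℛ(s) : Az = y, sᵀz = R(A,y)}, where ℛ(s) = {diag(s)x : x ∈ [0,∞)^N} is the signed orthant determined by s. Moreover, 𝒰(A,y) is closed, convex and bounded. -/
section Aux

variable {m N : ℕ}

lemma norm1_nonneg {n : ℕ} (v : Fin n → ℝ) : 0 ≤ norm1 v :=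
  Finset.sum_nonneg fun i _ => abs_nonneg _

lemma continuous_norm1 {n : ℕ} : Continuous (norm1 (n := n)) :=
  continuous_finset_sum _ fun i _ => (continuous_apply i).abs

lemma abs_le_norm1 {n : ℕ} (v : Fin n → ℝ) (i : Fin n) : |v i| ≤ norm1 v :=
  Finset.single_le_sum (fun j _ => abs_nonneg (v j)) (Finset.mem_univ i)

lemma norm1_add_le {n : ℕ} (u v : Fin n → ℝ) : norm1 (u + v) ≤ norm1 u + norm1 v := by
  rw [norm1, norm1, norm1, ← Finset.sum_add_distrib]
  exact Finset.sum_le_sum fun i _ => abs_add_le _ _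

lemma norm1_smul {n : ℕ} (a : ℝ) (ha : 0 ≤ a) (v : Fin n → ℝ) :
    norm1 (a • v) = a * norm1 v := by
  rw [norm1, norm1, Finset.mul_sum]
  refine Finset.sum_congr rfl fun i _ => ?_
  simp [abs_mul, abs_of_nonneg ha]

lemma exists_sol (A : Matrix (Fin m) (Fin N) ℝ) (hA : A.rank = m) (y : Fin m → ℝ) :
    ∃ z, A.mulVec z = y := by
  have : LinearMap.range A.mulVecLin = ⊤ := by
    apply Submodule.eq_top_of_finrank_eq
    rw [Matrix.rank] at hA
    simp [hA]
  have hy : y ∈ LinearMap.range A.mulVecLin := this ▸ Submodule.mem_top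
  obtain ⟨z, hz⟩ := hy
  exact ⟨z, hz⟩

lemma exists_min (A : Matrix (Fin m) (Fin N) ℝ) (hA : A.rank = m) (y : Fin m → ℝ) :
    ∃ z, z ∈ BPset A y := by
  obtain ⟨z0, hz0⟩ := exists_sol A hA y
  set K : Set (Fin N → ℝ) := {z | A.mulVec z = y ∧ norm1 z ≤ norm1 z0} with hK
  have hKclosed : IsClosed K := by
    apply IsClosed.inter
    · exact isClosed_eq (Matrix.mulVecLin A).continuous_of_finiteDimensional continuous_const
    · exact isClosed_le continuous_norm1 continuous_const
  have hKbdd : Bornology.IsBounded K := by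
    refine (Metric.isBounded_closedBall (x := (0 : Fin N → ℝ)) (r := norm1 z0)).subset ?_
    intro z hz
    rw [Metric.mem_closedBall, dist_zero_right]
    refine pi_norm_le_iff_of_nonneg (norm1_nonneg z0) |>.mpr fun i => ?_
    calc ‖z i‖ = |z i| := rfl
    _ ≤ norm1 z := abs_le_norm1 z i
    _ ≤ norm1 z0 := hz.2
  have hKcompact : IsCompact K := Metric.isCompact_of_isClosed_isBounded hKclosed hKbdd
  have hKne : K.Nonempty := ⟨z0, hz0, le_refl _⟩
  obtain ⟨zm, hzm, hmin⟩ := hKcompact.exists_isMinOn hKne continuous_norm1.continuousOn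
  refine ⟨zm, hzm.1, fun w hw => ?_⟩
  by_cases hwK : w ∈ K
  · exact hmin hwK
  · have hlt : norm1 z0 < norm1 w := by
      by_contra h
      exact hwK ⟨hw, le_of_not_gt h⟩
    exact le_trans (hmin ⟨hz0, le_refl _⟩) hlt.le

lemma Rmin_le (A : Matrix (Fin m) (Fin N) ℝ) (y : Fin m → ℝ) (w : Fin N → ℝ)
    (hw : A.mulVec w = y) : Rmin A y ≤ norm1 w := by
  apply csInf_le
  · exact ⟨0, by rintro r ⟨z, hz, rfl⟩; exact norm1_nonneg z⟩
  · exact ⟨w, hw, rfl⟩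

lemma Rmin_eq (A : Matrix (Fin m) (Fin N) ℝ) (y : Fin m → ℝ) (z : Fin N → ℝ)
    (hz : z ∈ BPset A y) : Rmin A y = norm1 z := by
  apply le_antisymm (Rmin_le A y z hz.1)
  apply le_csInf ⟨norm1 z, Set.mem_image_of_mem norm1 hz.1⟩
  rintro r ⟨w, hw, rfl⟩
  exact hz.2 w hw

lemma BPset_eq (A : Matrix (Fin m) (Fin N) ℝ) (y : Fin m → ℝ) :
    BPset A y = {z | A.mulVec z = y ∧ norm1 z = Rmin A y} := by
  ext z
  constructor
  · intro hz
    exact ⟨hz.1, (Rmin_eq A y z hz).symm⟩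
  · rintro ⟨h1, h2⟩
    exact ⟨h1, fun w hw => h2 ▸ Rmin_le A y w hw⟩

end Aux

/-- Lemma `M_s_lemma`: there is a sign vector s ∈ {−1,1}^N with
𝒰(A,y) = {z ∈ ℛ(s) : Az = y, sᵀz = R(A,y)}, where ℛ(s) = {diag(s)x : x ≥ 0};
moreover 𝒰(A,y) is closed, convex and bounded. -/
theorem stmt13 (m N : ℕ) (hm : 1 ≤ m) (hmN : m < N)
    (A : Matrix (Fin m) (Fin N) ℝ) (hA : A.rank = m) (y : Fin m → ℝ) :
    ∃ s : Fin N → ℝ, (∀ i, s i = 1 ∨ s i = -1) ∧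
      BPset A y = {z : Fin N → ℝ |
        (∃ x : Fin N → ℝ, (∀ i, 0 ≤ x i) ∧ z = fun i => s i * x i) ∧
        A.mulVec z = y ∧ ∑ i, s i * z i = Rmin A y} ∧
      IsClosed (BPset A y) ∧ Convex ℝ (BPset A y) ∧
      Bornology.IsBounded (BPset A y) := by
  classical
  obtain ⟨zm, hzm⟩ := exists_min A hA y
  set s : Fin N → ℝ := fun i => if ∀ z ∈ BPset A y, 0 ≤ z i then 1 else -1 with hs
  have hs1 : ∀ i, s i = 1 ∨ s i = -1 := by
    intro i
    by_cases h : ∀ z ∈ BPset A y, 0 ≤ z i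
    · exact Or.inl (by simp only [hs, if_pos h])
    · exact Or.inr (by simp only [hs, if_neg h])
  have hsq : ∀ i, s i * s i = 1 := by
    intro i; rcases hs1 i with h | h <;> rw [h] <;> norm_num
  have habs : ∀ i, |s i| = 1 := by
    intro i; rcases hs1 i with h | h <;> rw [h] <;> norm_num
  -- key: minimizers lie in the orthant of s
  have hkey : ∀ z ∈ BPset A y, ∀ i, 0 ≤ s i * z i := by
    intro z hz i
    by_cases h : ∀ w ∈ BPset A y, 0 ≤ w i
    · simp only [hs, if_pos h, one_mul]; exact h z hz
    · simp only [hs, if_neg h, neg_one_mul, neg_nonneg]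
      push_neg at h
      obtain ⟨u, hu, hui⟩ := h
      by_contra hzi
      push_neg at hzi
      set w : Fin N → ℝ := fun j => (u j + z j) / 2 with hwdef
      have hwfeas : A.mulVec w = y := by
        have hrw : w = (1/2 : ℝ) • u + (1/2 : ℝ) • z := by
          funext j; simp [hwdef, Pi.add_apply, Pi.smul_apply, smul_eq_mul]; ring
        rw [hrw, Matrix.mulVec_add, Matrix.mulVec_smul, Matrix.mulVec_smul, hu.1, hz.1]
        funext j; simp [Pi.add_apply, Pi.smul_apply, smul_eq_mul]; ring
      have hRu : norm1 u = Rmin A y := (Rmin_eq A y u hu).symm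
      have hRz : norm1 z = Rmin A y := (Rmin_eq A y z hz).symm
      have hsum : norm1 w < ∑ j, (|u j| + |z j|) / 2 := by
        refine Finset.sum_lt_sum (fun j _ => ?_) ⟨i, Finset.mem_univ i, ?_⟩
        · show |w j| ≤ (|u j| + |z j|) / 2
          rw [hwdef]
          rw [abs_div, abs_two]
          exact div_le_div_of_nonneg_right (abs_add_le _ _) two_pos.le
        · show |w i| < (|u i| + |z i|) / 2
          have h1 : |u i| = -(u i) := abs_of_neg hui
          have h2 : |z i| = z i := abs_of_pos hzi
          rw [hwdef, h1, h2, abs_div, abs_two]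
          rw [div_lt_div_iff_of_pos_right two_pos]
          rw [abs_lt]
          constructor <;> linarith
      have hlt : norm1 w < Rmin A y := by
        have : ∑ j, (|u j| + |z j|) / 2 = (norm1 u + norm1 z) / 2 := by
          rw [norm1, norm1, ← Finset.sum_add_distrib, Finset.sum_div]
        rw [this, hRu, hRz] at hsum
        linarith
      exact absurd (Rmin_le A y w hwfeas) (not_le.mpr hlt)
  refine ⟨s, hs1, ?_, ?_, ?_, ?_⟩
  · -- set equality
    ext z
    constructor
    · intro hz
      have habs' : ∀ i, s i * z i = |z i| := by
        intro i
        have := hkey z hz i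
        have : |s i * z i| = s i * z i := abs_of_nonneg this
        rw [abs_mul, habs i, one_mul] at this
        exact this.symm ▸ this
      refine ⟨⟨fun i => s i * z i, fun i => hkey z hz i, ?_⟩, hz.1, ?_⟩
      · funext i
        rw [← mul_assoc, hsq i, one_mul]
      · rw [show (∑ i, s i * z i) = norm1 z from by
          rw [norm1]; exact Finset.sum_congr rfl fun i _ => habs' i]
        exact (Rmin_eq A y z hz).symm
    · rintro ⟨⟨x, hx, rfl⟩, hAz, hsum⟩
      have habs' : ∀ i, s i * (s i * x i) = |s i * x i| := by
        intro i
        rw [← mul_assoc, hsq i, one_mul, abs_mul, habs i, one_mul, abs_of_nonneg (hx i)]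
      have hn1 : norm1 (fun i => s i * x i) = Rmin A y := by
        rw [norm1, ← hsum]
        exact Finset.sum_congr rfl fun i _ => (habs' i).symm
      rw [BPset_eq]
      exact ⟨hAz, hn1⟩
  · -- closed
    rw [BPset_eq]
    exact IsClosed.inter
      (isClosed_eq (Matrix.mulVecLin A).continuous_of_finiteDimensional continuous_const)
      (isClosed_eq continuous_norm1 continuous_const)
  · -- convex
    intro u hu v hv a b ha hb hab
    have hAuv : A.mulVec (a • u + b • v) = y := by
      rw [Matrix.mulVec_add, Matrix.mulVec_smul, Matrix.mulVec_smul, hu.1, hv.1]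
      funext j; simp [Pi.add_apply, Pi.smul_apply, smul_eq_mul]
      rw [← add_mul, hab, one_mul]
    refine ⟨hAuv, fun w hw => ?_⟩
    calc norm1 (a • u + b • v) ≤ norm1 (a • u) + norm1 (b • v) := norm1_add_le _ _
    _ = a * norm1 u + b * norm1 v := by rw [norm1_smul a ha, norm1_smul b hb]
    _ = a * Rmin A y + b * Rmin A y := by
        rw [← Rmin_eq A y u hu, ← Rmin_eq A y v hv]
    _ = Rmin A y := by rw [← add_mul, hab, one_mul]
    _ ≤ norm1 w := Rmin_le A y w hw
  · -- bounded
    have hR0 : 0 ≤ Rmin A y := (Rmin_eq A y zm hzm) ▸ norm1_nonneg zm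
    refine (Metric.isBounded_closedBall (x := (0 : Fin N → ℝ)) (r := Rmin A y)).subset ?_
    intro z hz
    rw [Metric.mem_closedBall, dist_zero_right]
    refine pi_norm_le_iff_of_nonneg hR0 |>.mpr fun i => ?_
    calc ‖z i‖ = |z i| := rfl
    _ ≤ norm1 z := abs_le_norm1 z i
    _ = Rmin A y := (Rmin_eq A y z hz).symm
end

section
/- Let u, v ∈ [0, e^{−1}]^N with u ≠ v. Then Σ_{i=1}^N |u_i ln(u_i) − v_i ln(v_i)| ≤ √N ‖u − v‖₂ ln(N/‖u − v‖₂), where by convention 0·ln 0 = 0. -/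
section AuxEntropy
lemma aux_mono {a b : ℝ} (ha : 0 ≤ a) (hab : a ≤ b) (hb : b ≤ (Real.exp 1)⁻¹) :
    b * Real.log b ≤ a * Real.log a := by
  have he1 : (1:ℝ) ≤ Real.exp 1 := by
    have := Real.add_one_le_exp (1:ℝ); linarith
  rcases eq_or_lt_of_le ha with h0 | h0
  · rw [← h0]
    simp only [zero_mul]
    have hb1 : b ≤ 1 := le_trans hb (by rw [inv_le_one_iff₀]; right; exact he1)
    have := Real.log_nonpos (le_trans ha hab) hb1
    nlinarith [le_trans ha hab]
  · have hbpos : 0 < b := lt_of_lt_of_le h0 hab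
    have hlogb : Real.log b ≤ -1 := by
      calc Real.log b ≤ Real.log (Real.exp 1)⁻¹ := Real.log_le_log hbpos hb
        _ = -1 := by rw [Real.log_inv, Real.log_exp]
    have hlog : Real.log b - Real.log a ≤ b / a - 1 := by
      have h1 : Real.log (b / a) ≤ b / a - 1 :=
        Real.log_le_sub_one_of_pos (by positivity)
      rwa [Real.log_div (ne_of_gt hbpos) (ne_of_gt h0)] at h1
    have key : a * (Real.log b - Real.log a) ≤ b - a := by
      have := mul_le_mul_of_nonneg_left hlog h0.le
      have ha' : a * (b / a - 1) = b - a := by field_simp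
      linarith [ha' ▸ this]
    have key2 : (b - a) * Real.log b ≤ -(b - a) := by
      nlinarith [sub_nonneg.2 hab]
    nlinarith

lemma aux_superadd {a d : ℝ} (ha : 0 ≤ a) (hd : 0 ≤ d) :
    a * Real.log a + d * Real.log d ≤ (a + d) * Real.log (a + d) := by
  rcases eq_or_lt_of_le ha with h0 | h0
  · simp [← h0]
  rcases eq_or_lt_of_le hd with h1 | h1
  · simp [← h1]
  have k1 : a * Real.log a ≤ a * Real.log (a + d) :=
    mul_le_mul_of_nonneg_left (Real.log_le_log h0 (by linarith)) ha
  have k2 : d * Real.log d ≤ d * Real.log (a + d) :=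
    mul_le_mul_of_nonneg_left (Real.log_le_log h1 (by linarith)) hd
  nlinarith

lemma aux_term' {a b : ℝ} (ha : a ∈ Set.Icc (0:ℝ) (Real.exp 1)⁻¹)
    (hb : b ∈ Set.Icc (0:ℝ) (Real.exp 1)⁻¹) (h : b ≤ a) :
    |a * Real.log a - b * Real.log b| ≤ -((a - b) * Real.log (a - b)) := by
  obtain ⟨ha0, ha1⟩ := ha
  obtain ⟨hb0, hb1⟩ := hb
  have hd0 : 0 ≤ a - b := sub_nonneg.2 h
  have hd1 : a - b ≤ (Real.exp 1)⁻¹ := by linarith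
  rw [abs_le]
  constructor
  · have := aux_superadd hb0 hd0
    rw [show b + (a - b) = a by ring] at this
    linarith
  · have h1 : a * Real.log a ≤ b * Real.log b := aux_mono hb0 h ha1
    have h2 : (a - b) * Real.log (a - b) ≤ 0 * Real.log 0 := aux_mono le_rfl hd0 hd1
    simp only [zero_mul] at h2
    linarith

lemma aux_term {a b : ℝ} (ha : a ∈ Set.Icc (0:ℝ) (Real.exp 1)⁻¹)
    (hb : b ∈ Set.Icc (0:ℝ) (Real.exp 1)⁻¹) :
    |a * Real.log a - b * Real.log b| ≤ -(|a - b| * Real.log |a - b|) := by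
  rcases le_total b a with h | h
  · rw [abs_of_nonneg (sub_nonneg.2 h)]; exact aux_term' ha hb h
  · rw [abs_sub_comm a b, abs_of_nonneg (sub_nonneg.2 h), abs_sub_comm]
    exact aux_term' hb ha h

lemma aux_tlog {a b c : ℝ} (ha : 0 < a) (hab : a ≤ b) (hc : b * Real.exp 1 ≤ c) :
    a * Real.log (c / a) ≤ b * Real.log (c / b) := by
  have hb : 0 < b := lt_of_lt_of_le ha hab
  have hc0 : 0 < c := lt_of_lt_of_le (by positivity) hc
  have k2 : 1 ≤ Real.log (c / b) := by
    have : Real.exp 1 ≤ c / b := (le_div_iff₀ hb).2 (by linarith [mul_comm b (Real.exp 1)])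
    calc (1:ℝ) = Real.log (Real.exp 1) := (Real.log_exp 1).symm
      _ ≤ Real.log (c / b) := Real.log_le_log (Real.exp_pos 1) this
  have hlog : Real.log b - Real.log a ≤ b / a - 1 := by
    have h1 : Real.log (b / a) ≤ b / a - 1 := Real.log_le_sub_one_of_pos (by positivity)
    rwa [Real.log_div (ne_of_gt hb) (ne_of_gt ha)] at h1
  have key : a * (Real.log b - Real.log a) ≤ b - a := by
    have := mul_le_mul_of_nonneg_left hlog ha.le
    have ha' : a * (b / a - 1) = b - a := by field_simp
    linarith [ha' ▸ this]
  rw [Real.log_div (ne_of_gt hc0) (ne_of_gt hb)] at k2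
  rw [Real.log_div (ne_of_gt hc0) (ne_of_gt ha), Real.log_div (ne_of_gt hc0) (ne_of_gt hb)]
  nlinarith [mul_nonneg (sub_nonneg.2 hab) (by linarith : (0:ℝ) ≤ Real.log c - Real.log b - 1)]

lemma aux_jensen {N : ℕ} (hN : 0 < N) (d : Fin N → ℝ) (hd : ∀ i, 0 ≤ d i)
    (hS : 0 < ∑ i, d i) :
    ∑ i, -(d i * Real.log (d i)) ≤ (∑ i, d i) * Real.log (N / ∑ i, d i) := by
  have hNR : (0:ℝ) < N := Nat.cast_pos.2 hN
  have hJ := Real.concaveOn_negMulLog.le_map_sum (t := Finset.univ)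
    (w := fun _ : Fin N => (N:ℝ)⁻¹) (p := d)
    (fun i _ => by positivity)
    (by simp [Finset.sum_const, Finset.card_univ]; field_simp)
    (fun i _ => hd i)
  simp only [smul_eq_mul] at hJ
  rw [← Finset.mul_sum, ← Finset.mul_sum] at hJ
  have h2 : Real.negMulLog ((N:ℝ)⁻¹ * ∑ i, d i)
      = (N:ℝ)⁻¹ * ((∑ i, d i) * (Real.log N - Real.log (∑ i, d i))) := by
    rw [Real.negMulLog, Real.log_mul (by positivity) (ne_of_gt hS), Real.log_inv]; ring
  rw [h2] at hJ
  have h3 : ∑ i, Real.negMulLog (d i) ≤ (∑ i, d i) * (Real.log N - Real.log (∑ i, d i)) := by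
    have := mul_le_mul_of_nonneg_left hJ hNR.le
    rw [← mul_assoc, ← mul_assoc, mul_inv_cancel₀ (ne_of_gt hNR), one_mul, one_mul] at this
    exact this
  rw [Real.log_div (ne_of_gt hNR) (ne_of_gt hS)]
  simpa [Real.negMulLog, neg_mul] using h3
end AuxEntropy

/-- Lemma `entropy_diff_bound`: for u, v ∈ [0, e^{−1}]^N with
u ≠ v, ∑ |uᵢ ln uᵢ − vᵢ ln vᵢ| ≤ √N ‖u − v‖₂ ln(N/‖u − v‖₂) (the convention
0 · ln 0 = 0 holds automatically since `Real.log 0 = 0`). -/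
theorem stmt17 (N : ℕ) (hN : 0 < N) (u v : Fin N → ℝ)
    (hu : ∀ i, u i ∈ Set.Icc (0 : ℝ) (Real.exp 1)⁻¹)
    (hv : ∀ i, v i ∈ Set.Icc (0 : ℝ) (Real.exp 1)⁻¹)
    (huv : u ≠ v) :
    ∑ i, |u i * Real.log (u i) - v i * Real.log (v i)| ≤
      Real.sqrt N * norm2 (fun i => u i - v i) *
        Real.log (N / norm2 (fun i => u i - v i)) := by
  have hNR : (0:ℝ) < N := Nat.cast_pos.2 hN
  set d : Fin N → ℝ := fun i => |u i - v i| with hddef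
  have hd0 : ∀ i, 0 ≤ d i := fun i => abs_nonneg _
  have hd1 : ∀ i, d i ≤ (Real.exp 1)⁻¹ := by
    intro i
    have h1 := hu i; have h2 := hv i
    rw [hddef, abs_sub_le_iff]
    constructor <;> [linarith [h1.2, h2.1]; linarith [h2.2, h1.1]]
  obtain ⟨i₀, hi₀⟩ : ∃ i, u i ≠ v i := Function.ne_iff.1 huv
  have hdi₀ : 0 < d i₀ := abs_pos.2 (sub_ne_zero.2 hi₀)
  set S := ∑ i, d i with hSdef
  have hS : 0 < S :=
    lt_of_lt_of_le hdi₀ (Finset.single_le_sum (fun i _ => hd0 i) (Finset.mem_univ i₀))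
  set s := norm2 (fun i => u i - v i) with hsdef
  have hs_eq : s = Real.sqrt (∑ i, d i ^ 2) := by
    rw [hsdef, norm2]
    congr 1
    exact Finset.sum_congr rfl fun i _ => (sq_abs _).symm
  have hs : 0 < s := by
    rw [hs_eq]
    apply Real.sqrt_pos.2
    exact lt_of_lt_of_le (by positivity)
      (Finset.single_le_sum (f := fun i => d i ^ 2) (fun i _ => sq_nonneg _)
        (Finset.mem_univ i₀))
  -- Cauchy-Schwarz : S ≤ √N * s
  have hCS : S ≤ Real.sqrt N * s := by
    have h := Real.sum_mul_le_sqrt_mul_sqrt Finset.univ d (fun _ => (1:ℝ))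
    simp only [mul_one, one_pow, Finset.sum_const, Finset.card_univ, Fintype.card_fin,
      nsmul_eq_mul] at h
    rw [hs_eq]
    calc S ≤ Real.sqrt (∑ i, d i ^ 2) * Real.sqrt N := h
      _ = Real.sqrt N * Real.sqrt (∑ i, d i ^ 2) := mul_comm _ _
  -- s ≤ √N / e, hence √N * s * e ≤ N
  have hsN : Real.sqrt N * s * Real.exp 1 ≤ N := by
    have h1 : ∑ i, d i ^ 2 ≤ N * ((Real.exp 1)⁻¹) ^ 2 := by
      calc ∑ i, d i ^ 2 ≤ ∑ _i : Fin N, ((Real.exp 1)⁻¹) ^ 2 :=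
            Finset.sum_le_sum fun i _ => pow_le_pow_left₀ (hd0 i) (hd1 i) 2
        _ = N * ((Real.exp 1)⁻¹) ^ 2 := by
            simp [Finset.sum_const, Finset.card_univ, mul_comm]
    have h2 : s ≤ Real.sqrt N * (Real.exp 1)⁻¹ := by
      rw [hs_eq]
      calc Real.sqrt (∑ i, d i ^ 2) ≤ Real.sqrt (N * ((Real.exp 1)⁻¹) ^ 2) :=
            Real.sqrt_le_sqrt h1
        _ = Real.sqrt N * (Real.exp 1)⁻¹ := by
            rw [Real.sqrt_mul hNR.le, Real.sqrt_sq (by positivity)]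
    have h3 : Real.sqrt N * s ≤ Real.sqrt N * (Real.sqrt N * (Real.exp 1)⁻¹) :=
      mul_le_mul_of_nonneg_left h2 (Real.sqrt_nonneg _)
    have h4 : Real.sqrt N * Real.sqrt N = (N:ℝ) := Real.mul_self_sqrt hNR.le
    have he : (0:ℝ) < Real.exp 1 := Real.exp_pos 1
    calc Real.sqrt N * s * Real.exp 1
        ≤ Real.sqrt N * (Real.sqrt N * (Real.exp 1)⁻¹) * Real.exp 1 :=
          mul_le_mul_of_nonneg_right h3 he.le
      _ = Real.sqrt N * Real.sqrt N := by field_simp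
      _ = (N:ℝ) := h4
  -- chain
  calc ∑ i, |u i * Real.log (u i) - v i * Real.log (v i)|
      ≤ ∑ i, -(d i * Real.log (d i)) :=
        Finset.sum_le_sum fun i _ => aux_term (hu i) (hv i)
    _ ≤ S * Real.log (N / S) := aux_jensen hN d hd0 hS
    _ ≤ (Real.sqrt N * s) * Real.log (N / (Real.sqrt N * s)) := aux_tlog hS hCS hsN
    _ ≤ Real.sqrt N * s * Real.log (N / s) := by
        apply mul_le_mul_of_nonneg_left _ (by positivity)
        apply Real.log_le_log (by positivity)
        apply div_le_div_of_nonneg_left hNR.le hs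
        calc s = 1 * s := (one_mul s).symm
          _ ≤ Real.sqrt N * s := by
              apply mul_le_mul_of_nonneg_right _ hs.le
              rw [show (1:ℝ) = Real.sqrt 1 from (Real.sqrt_one).symm]
              exact Real.sqrt_le_sqrt (by exact_mod_cast hN)
end
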